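/- arXiv:1706.03976 — 6 statements merged into one kernel-verified Lean document; each statement's English description precedes it below -/
import Mathlib

section
/- Let C : ℂ⁴ → ℂ⁴ be the ℝ-linear involution given in lexicographic double-index coordinates by (Cw)_{(i,j)} = conj(w_{(j,i)}) for i,j ∈ {0,1}, i.e. C(w₁,w₂,w₃,w₄) = (conj w₁, conj w₃, conj w₂, conj w₄). Then: (1) C ∘ A(k) = A(k) ∘ C as ℝ-linear maps on ℂ⁴, for every k ∈ ℝ, so the real eigenspaces W₊ = {w : Cw = w} and W₋ = {w : Cw = −w}, each of ℝ-dimension 4, are invariant under every A(k); (2) the unital ℝ-subalgebra 𝒜 of Mat₄(ℂ) (viewed as a real algebra) generated by {A(k) : k ∈ ℝ} has dim_ℝ 𝒜 = 16; in fact, with the unitary U = (1/√2)·[[1−i,0,0,0],[0,1,−i,0],[0,−i,1,0],[0,0,0,1−i]] one has U·𝒜·U⁻¹ = Mat₄(ℝ) ⊂ Mat₄(ℂ); (3) 𝒜 acts irreducibly on each of W₊ and W₋: the only ℝ-subspaces of W₊ (respectively W₋) invariant under all the matrices A(k), k ∈ ℝ, are {0} and W₊ (respectively {0} and W₋). -/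
open Filter

/-- The Perron–Frobenius eigenvalue `λ = (1+√13)/2` of `M = [[1,1],[3,0]]`. -/
noncomputable def lam : ℝ := (1 + Real.sqrt 13) / 2

/-- `p(k) = e^{2πikλ} + e^{2πik(λ+1)} + e^{2πik(λ+2)}`. -/
noncomputable def pfun (k : ℝ) : ℂ :=
  Complex.exp (((2 * Real.pi * k * lam : ℝ) : ℂ) * Complex.I) +
  Complex.exp (((2 * Real.pi * k * (lam + 1) : ℝ) : ℂ) * Complex.I) +
  Complex.exp (((2 * Real.pi * k * (lam + 2) : ℝ) : ℂ) * Complex.I)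

/-- The Fourier matrix `B(k) = [[1,1],[p(k),0]]`. -/
noncomputable def Bmat (k : ℝ) : Matrix (Fin 2) (Fin 2) ℂ :=
  !![1, 1; pfun k, 0]

/-- `A(k) = B(k) ⊗ conj(B(k))`, with lexicographically ordered double indices:
`A_{(i,j),(m,n)}(k) = B_{im}(k) · conj(B_{jn}(k))`. -/
noncomputable def Amat (k : ℝ) : Matrix (Fin 2 × Fin 2) (Fin 2 × Fin 2) ℂ :=
  fun ij mn => Bmat k ij.1 mn.1 * (starRingEnd ℂ) (Bmat k ij.2 mn.2)

/-- The ℝ-linear involution `C` on `ℂ⁴` given by `(Cw)_{(i,j)} = conj (w_{(j,i)})`. -/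
noncomputable def Cmap : (Fin 2 × Fin 2 → ℂ) →ₗ[ℝ] (Fin 2 × Fin 2 → ℂ) where
  toFun w := fun ij => (starRingEnd ℂ) (w (ij.2, ij.1))
  map_add' x y := by funext ij; simp
  map_smul' c x := by
    funext ij
    simp [Complex.real_smul, Complex.conj_ofReal]

/-- The `+1` eigenspace `W₊` of `C`. -/
noncomputable def Wplus : Submodule ℝ (Fin 2 × Fin 2 → ℂ) :=
  LinearMap.ker (Cmap - LinearMap.id)

/-- The `−1` eigenspace `W₋` of `C`. -/
noncomputable def Wminus : Submodule ℝ (Fin 2 × Fin 2 → ℂ) :=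
  LinearMap.ker (Cmap + LinearMap.id)

/-- The unital ℝ-subalgebra `𝒜` of `Mat₄(ℂ)` generated by `{A(k) : k ∈ ℝ}`. -/
noncomputable def calA : Subalgebra ℝ (Matrix (Fin 2 × Fin 2) (Fin 2 × Fin 2) ℂ) :=
  Algebra.adjoin ℝ (Set.range Amat)

/-- The unitary matrix `U = (1/√2)·[[1−i,0,0,0],[0,1,−i,0],[0,−i,1,0],[0,0,0,1−i]]`
in lexicographic double-index coordinates. -/
noncomputable def Umat : Matrix (Fin 2 × Fin 2) (Fin 2 × Fin 2) ℂ := fun ij mn =>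
  ((Real.sqrt 2 : ℝ) : ℂ)⁻¹ *
    (if ij = mn ∧ (ij = ((0 : Fin 2), (0 : Fin 2)) ∨ ij = ((1 : Fin 2), (1 : Fin 2))) then
        1 - Complex.I
      else if ij = mn ∧ (ij = ((0 : Fin 2), (1 : Fin 2)) ∨ ij = ((1 : Fin 2), (0 : Fin 2))) then
        1
      else if (ij = ((0 : Fin 2), (1 : Fin 2)) ∧ mn = ((1 : Fin 2), (0 : Fin 2))) ∨
              (ij = ((1 : Fin 2), (0 : Fin 2)) ∧ mn = ((0 : Fin 2), (1 : Fin 2))) then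
        -Complex.I
      else 0)

/-!
Conjugation by the unitary `U` turns `A(k)` into the real matrix
`G₁ + Re p(k) • Gₓ + Im p(k) • G_y + |p(k)|² • G_r`. The values `p(1/3) = 0`, `p(0) = 3` and
`p(±1) = 3 e^{±2πiλ}` (with `Im p(1) ≠ 0` because `√13` is irrational) let one solve for the four
matrices `G₁, Gₓ, G_y, G_r`, and products of these produce a full row and column of matrix units;
hence `U 𝒜 U⁻¹ = Mat₄(ℝ)`. In the coordinates `U w` the involution `C` reads `z ↦ -i z̄`, so `U`
carries `W₊` and `W₋` onto `(1 - i) ℝ⁴` and `(1 + i) ℝ⁴`, on whose nonzero vectors `Mat₄(ℝ)` acts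
transitively. That `C` commutes with `A(k)` is the symmetry `A_{(j,i),(n,m)} = conj A_{(i,j),(m,n)}`.
-/

open Matrix Complex ComplexConjugate

local notation "Mat₄" => Matrix (Fin 2 × Fin 2) (Fin 2 × Fin 2)

namespace Matrix

variable {n : Type*} [Fintype n] [DecidableEq n]

theorem subalgebra_eq_top_of_single_mem {R : Type*} [CommSemiring R]
    (S : Subalgebra R (Matrix n n R)) (i₀ : n)
    (hcol : ∀ a, single a i₀ (1 : R) ∈ S) (hrow : ∀ b, single i₀ b (1 : R) ∈ S) : S = ⊤ := by
  refine eq_top_iff.mpr fun M _ => ?_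
  rw [matrix_eq_sum_single M]
  refine sum_mem fun a _ => sum_mem fun b _ => ?_
  have hab : single a b (M a b) = M a b • (single a i₀ 1 * single i₀ b 1) := by
    rw [single_mul_single_same, mul_one, smul_single, smul_eq_mul, mul_one]
  rw [hab]
  exact S.smul_mem (mul_mem (hcol a) (hrow b)) _

theorem exists_mulVec_eq_of_ne_zero {K : Type*} [Field K] {x : n → K} (hx : x ≠ 0) (y : n → K) :
    ∃ M : Matrix n n K, M *ᵥ x = y := by
  obtain ⟨b, hb⟩ := Function.ne_iff.mp hx
  refine ⟨vecMulVec y (Pi.single b (x b)⁻¹), ?_⟩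
  rw [vecMulVec_mulVec, single_dotProduct, inv_mul_cancel₀ hb]
  simp

theorem mulVec_mem_of_mem_adjoin {R K : Type*} [CommSemiring R] [CommSemiring K] [Algebra R K]
    {s : Set (Matrix n n K)} {S : Submodule R (n → K)} (hs : ∀ X ∈ s, ∀ w ∈ S, X *ᵥ w ∈ S)
    {X : Matrix n n K} (hX : X ∈ Algebra.adjoin R s) : ∀ w ∈ S, X *ᵥ w ∈ S := by
  induction hX using Algebra.adjoin_induction with
  | mem X hX => exact hs X hX
  | algebraMap r =>
    intro w hw
    rw [Algebra.algebraMap_eq_smul_one, smul_mulVec, one_mulVec]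
    exact S.smul_mem r hw
  | add X Y _ _ hX hY =>
    intro w hw
    rw [add_mulVec]
    exact S.add_mem (hX w hw) (hY w hw)
  | mul X Y _ _ hX hY =>
    intro w hw
    rw [← mulVec_mulVec]
    exact hX _ (hY w hw)

end Matrix

theorem Submodule.eq_bot_or_eq_of_forall_exists_mulVec_eq {R K n : Type*} [Semiring R]
    [Semiring K] [Module R K] [Fintype n] {S W : Submodule R (n → K)} (𝒮 : Set (Matrix n n K))
    (hSW : S ≤ W) (hS : ∀ X ∈ 𝒮, ∀ w ∈ S, X *ᵥ w ∈ S)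
    (htrans : ∀ w ∈ W, w ≠ 0 → ∀ u ∈ W, ∃ X ∈ 𝒮, X *ᵥ w = u) : S = ⊥ ∨ S = W := by
  refine or_iff_not_imp_left.mpr fun hS0 => le_antisymm hSW fun u hu => ?_
  obtain ⟨w, hwS, hw0⟩ := (Submodule.ne_bot_iff S).mp hS0
  obtain ⟨X, hX, rfl⟩ := htrans w (hSW hwS) hw0 u hu
  exact hS X hX w hwS

namespace Complex

theorem eq_neg_I_mul_conj_iff {z : ℂ} : z = -I * conj z ↔ ∃ r : ℝ, z = (1 - I) * r := by
  refine ⟨fun h => ⟨z.re, ?_⟩, fun ⟨r, hr⟩ => hr ▸ Complex.ext (by simp) (by simp)⟩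
  have him := congrArg im h
  simp only [neg_mul, neg_im, mul_im, I_re, conj_im, I_im, conj_re] at him
  exact Complex.ext (by simp) (by simp; linarith)

theorem eq_I_mul_conj_iff {z : ℂ} : z = I * conj z ↔ ∃ r : ℝ, z = (1 + I) * r := by
  refine ⟨fun h => ⟨z.re, ?_⟩, fun ⟨r, hr⟩ => hr ▸ Complex.ext (by simp) (by simp)⟩
  have him := congrArg im h
  simp only [mul_im, I_re, conj_im, I_im, conj_re] at him
  exact Complex.ext (by simp) (by simp; linarith)

end Complex

open Real in
lemma pfun_eq_exp_mul_cos (k : ℝ) :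
    pfun k = exp (↑(2 * π * k * (lam + 1)) * I) * ↑(1 + 2 * Real.cos (2 * π * k)) := by
  have hcos : ((1 + 2 * Real.cos (2 * π * k) : ℝ) : ℂ) =
      1 + (exp (↑(2 * π * k) * I) + exp (-↑(2 * π * k) * I)) := by
    push_cast
    rw [two_cos]
  rw [pfun, hcos]
  simp only [mul_add, mul_one, ← Complex.exp_add]
  push_cast
  ring_nf

lemma pfun_neg (k : ℝ) : pfun (-k) = conj (pfun k) := by
  simp only [pfun, map_add, ← exp_conj, map_mul, conj_ofReal, conj_I]
  push_cast
  ring_nf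

lemma pfun_zero : pfun 0 = 3 := by
  rw [pfun_eq_exp_mul_cos]
  norm_num

open Real in
lemma pfun_one_third : pfun (1 / 3) = 0 := by
  have hcos : Real.cos (2 * π * (1 / 3)) = -1 / 2 := by
    rw [show 2 * π * (1 / 3) = π - π / 3 by ring, Real.cos_pi_sub, cos_pi_div_three]
    ring
  rw [pfun_eq_exp_mul_cos, hcos]
  norm_num

open Real in
lemma pfun_one : pfun 1 = exp (↑(2 * π * (lam + 1)) * I) * 3 := by
  rw [pfun_eq_exp_mul_cos, mul_one, Real.cos_two_pi]
  norm_num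

lemma normSq_pfun_one : normSq (pfun 1) = 9 := by
  rw [pfun_one, normSq_mul, normSq_eq_norm_sq, norm_exp_ofReal_mul_I]
  norm_num

open Real in
lemma im_pfun_one_ne_zero : (pfun 1).im ≠ 0 := by
  rw [pfun_one, mul_im, exp_ofReal_mul_I_re, exp_ofReal_mul_I_im, im_ofNat, re_ofNat, mul_zero,
    zero_add]
  refine mul_ne_zero (fun hsin => ?_) three_ne_zero
  obtain ⟨n, hn⟩ := Real.sin_eq_zero_iff.mp hsin
  have hsqrt : √13 = ((n - 3 : ℤ) : ℝ) := by
    have h : (n : ℝ) * π = (3 + √13) * π := by rw [hn, lam]; ring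
    push_cast
    linarith [mul_right_cancel₀ pi_ne_zero h]
  exact (Nat.Prime.irrational_sqrt (p := 13) (by norm_num)).ne_int _ (by exact_mod_cast hsqrt)

def G1 : Mat₄ ℝ :=
  single (0, 0) (0, 0) 1 + single (0, 0) (0, 1) 1 + single (0, 0) (1, 0) 1 + single (0, 0) (1, 1) 1

def Gx : Mat₄ ℝ :=
  single (0, 1) (0, 0) 1 + single (0, 1) (1, 0) 1 + single (1, 0) (0, 0) 1 + single (1, 0) (0, 1) 1

def Gy : Mat₄ ℝ :=
  single (0, 1) (0, 0) 1 + single (0, 1) (0, 1) 1 - single (1, 0) (0, 0) 1 - single (1, 0) (1, 0) 1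

def Gr : Mat₄ ℝ := single (1, 1) (0, 0) 1

noncomputable def hatMat (z : ℂ) : Mat₄ ℝ := G1 + z.re • Gx + z.im • Gy + normSq z • Gr

lemma single_mem_of_generators_mem {S : Subalgebra ℝ (Mat₄ ℝ)}
    (h1 : G1 ∈ S) (hx : Gx ∈ S) (hy : Gy ∈ S) (hr : Gr ∈ S) :
    (∀ a, single a (0, 0) (1 : ℝ) ∈ S) ∧ ∀ b, single (0, 0) b (1 : ℝ) ∈ S := by
  have h11 : G1 * Gr ∈ S := mul_mem h1 hr
  have e : single (0, 0) (0, 0) (1 : ℝ) = G1 * Gr ∧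
      single (0, 1) (0, 0) (1 : ℝ) = (2⁻¹ : ℝ) • ((Gx + Gy) * (G1 * Gr)) ∧
      single (1, 0) (0, 0) (1 : ℝ) = (2⁻¹ : ℝ) • ((Gx - Gy) * (G1 * Gr)) ∧
      single (0, 0) (0, 1) (1 : ℝ) = (2⁻¹ : ℝ) • (G1 * (Gx + Gy)) - G1 * Gr ∧
      single (0, 0) (1, 0) (1 : ℝ) = (2⁻¹ : ℝ) • (G1 * (Gx - Gy)) - G1 * Gr ∧
      single (0, 0) (1, 1) (1 : ℝ) = G1 - G1 * Gx + G1 * Gr := by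
    refine ⟨?_, ?_, ?_, ?_, ?_, ?_⟩ <;> ext ⟨i, j⟩ ⟨m, n⟩ <;>
      fin_cases i <;> fin_cases j <;> fin_cases m <;> fin_cases n <;>
      simp [Matrix.mul_apply, Fintype.sum_prod_type, G1, Gx, Gy, Gr] <;> norm_num
  obtain ⟨e11, e21, e31, e12, e13, e14⟩ := e
  constructor
  · rintro ⟨i, j⟩
    fin_cases i <;> fin_cases j
    · exact e11 ▸ h11
    · exact e21 ▸ S.smul_mem (mul_mem (add_mem hx hy) h11) _
    · exact e31 ▸ S.smul_mem (mul_mem (sub_mem hx hy) h11) _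
    · exact hr
  · rintro ⟨i, j⟩
    fin_cases i <;> fin_cases j
    · exact e11 ▸ h11
    · exact e12 ▸ sub_mem (S.smul_mem (mul_mem h1 (add_mem hx hy)) _) h11
    · exact e13 ▸ sub_mem (S.smul_mem (mul_mem h1 (sub_mem hx hy)) _) h11
    · exact e14 ▸ add_mem (sub_mem h1 (mul_mem h1 hx)) h11

lemma generators_mem_of_hatMat_mem {S : Subalgebra ℝ (Mat₄ ℝ)} {z : ℂ} (him : z.im ≠ 0)
    (hnorm : normSq z = 9) (h0 : hatMat 0 ∈ S) (h3 : hatMat 3 ∈ S) (hz : hatMat z ∈ S)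
    (hz' : hatMat (conj z) ∈ S) : G1 ∈ S ∧ Gx ∈ S ∧ Gy ∈ S ∧ Gr ∈ S := by
  have hre : z.re - 3 ≠ 0 := by
    intro h
    rw [normSq_apply, show z.re = 3 by linarith] at hnorm
    exact him (by nlinarith)
  have hnorm3 : normSq 3 = 9 := by norm_num [normSq_apply]
  have e1 : G1 = hatMat 0 := by simp [hatMat]
  have ey : Gy = (2 * z.im)⁻¹ • (hatMat z - hatMat (conj z)) := by
    rw [eq_inv_smul_iff₀ (mul_ne_zero two_ne_zero him)]
    simp only [hatMat, conj_re, conj_im, normSq_conj]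
    module
  have ex : Gx = (2 * (z.re - 3))⁻¹ • (hatMat z + hatMat (conj z) - (2 : ℝ) • hatMat 3) := by
    rw [eq_inv_smul_iff₀ (mul_ne_zero two_ne_zero hre)]
    simp only [hatMat, conj_re, conj_im, normSq_conj, hnorm, hnorm3, re_ofNat, im_ofNat]
    module
  have er : Gr = (9 : ℝ)⁻¹ • (hatMat 3 - hatMat 0 - (3 : ℝ) • Gx) := by
    rw [eq_inv_smul_iff₀ (by norm_num)]
    simp only [hatMat, hnorm3, re_ofNat, im_ofNat, map_zero, zero_re, zero_im]
    module
  have hx : Gx ∈ S := ex ▸ S.smul_mem (sub_mem (add_mem hz hz') (S.smul_mem h3 _)) _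
  exact ⟨e1 ▸ h0, hx, ey ▸ S.smul_mem (sub_mem hz hz') _,
    er ▸ S.smul_mem (sub_mem (sub_mem h3 h0) (S.smul_mem hx _)) _⟩

lemma adjoin_hatMat_pfun_eq_top : Algebra.adjoin ℝ (Set.range fun k => hatMat (pfun k)) = ⊤ := by
  have hmem (k : ℝ) : hatMat (pfun k) ∈ Algebra.adjoin ℝ (Set.range fun k => hatMat (pfun k)) :=
    Algebra.subset_adjoin ⟨k, rfl⟩
  obtain ⟨h1, hx, hy, hr⟩ := generators_mem_of_hatMat_mem im_pfun_one_ne_zero normSq_pfun_one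
    (pfun_one_third ▸ hmem _) (pfun_zero ▸ hmem 0) (hmem 1) (pfun_neg 1 ▸ hmem (-1))
  obtain ⟨hcol, hrow⟩ := single_mem_of_generators_mem h1 hx hy hr
  exact subalgebra_eq_top_of_single_mem _ (0, 0) hcol hrow

lemma inv_sqrt_two_sq : ((Real.sqrt 2 : ℝ) : ℂ)⁻¹ ^ 2 = 1 / 2 := by
  rw [inv_pow, ← ofReal_pow, Real.sq_sqrt zero_le_two]
  norm_num

lemma Umat_mem_unitaryGroup : Umat ∈ unitaryGroup (Fin 2 × Fin 2) ℂ := by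
  have h := inv_sqrt_two_sq
  rw [mem_unitaryGroup_iff]
  ext ⟨i, j⟩ ⟨m, n⟩
  fin_cases i <;> fin_cases j <;> fin_cases m <;> fin_cases n <;>
    simp [Matrix.mul_apply, Fintype.sum_prod_type, Umat, conj_ofReal] <;>
    ring_nf <;> simp [I_sq, h] <;> ring_nf

noncomputable def conjU : Mat₄ ℂ ≃ₐ[ℝ] Mat₄ ℂ :=
  (Unitary.conjStarAlgAut ℝ _ ⟨Umat, Umat_mem_unitaryGroup⟩).toAlgEquiv

lemma conjU_apply (X : Mat₄ ℂ) : conjU X = Umat * X * Umatᴴ := rfl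

lemma Umat_conjTranspose_mul_self : Umatᴴ * Umat = 1 :=
  Unitary.star_mul_self_of_mem Umat_mem_unitaryGroup

lemma Umat_mul_conjTranspose_self : Umat * Umatᴴ = 1 :=
  Unitary.mul_star_self_of_mem Umat_mem_unitaryGroup

lemma Umat_mulVec_injective : Function.Injective (Umat *ᵥ ·) := fun v w h => by
  simpa [mulVec_mulVec, Umat_conjTranspose_mul_self] using congrArg (Umatᴴ *ᵥ ·) h

lemma Umat_mulVec_mulVec (X : Mat₄ ℂ) (v : Fin 2 × Fin 2 → ℂ) :
    Umat *ᵥ (X *ᵥ v) = conjU X *ᵥ (Umat *ᵥ v) := by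
  rw [conjU_apply, mulVec_mulVec, mulVec_mulVec, Matrix.mul_assoc, Umat_conjTranspose_mul_self,
    Matrix.mul_one]

lemma Umat_mul_Amat_mul_conjTranspose (k : ℝ) :
    Umat * Amat k * Umatᴴ = (hatMat (pfun k)).map (↑) := by
  ext ⟨i, j⟩ ⟨m, n⟩
  fin_cases i <;> fin_cases j <;> fin_cases m <;> fin_cases n <;>
    simp [Matrix.mul_apply, Fintype.sum_prod_type, Umat, Amat, Bmat, hatMat, G1, Gx, Gy, Gr,
      conj_ofReal] <;>
    apply Complex.ext <;> simp [normSq_apply] <;> ring_nf <;> simp <;> ring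

lemma map_calA_conjU :
    calA.map (conjU : Mat₄ ℂ →ₐ[ℝ] Mat₄ ℂ) = (ofRealAm.mapMatrix : Mat₄ ℝ →ₐ[ℝ] Mat₄ ℂ).range := by
  have h : (conjU : Mat₄ ℂ →ₐ[ℝ] Mat₄ ℂ) ∘ Amat = ofRealAm.mapMatrix ∘ fun k => hatMat (pfun k) :=
    funext Umat_mul_Amat_mul_conjTranspose
  rw [calA, AlgHom.map_adjoin, ← Set.range_comp, h, Set.range_comp, ← AlgHom.map_adjoin, adjoin_hatMat_pfun_eq_top, Algebra.map_top]

lemma mem_range_mapMatrix_ofRealAm {Y : Mat₄ ℂ} :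
    Y ∈ (ofRealAm.mapMatrix : Mat₄ ℝ →ₐ[ℝ] Mat₄ ℂ).range ↔ ∀ i j, (Y i j).im = 0 := by
  refine ⟨?_, fun h => ⟨Y.map re, ?_⟩⟩
  · rintro ⟨M, rfl⟩ i j
    simp
  · ext i j
    exact Complex.ext (by simp) (by simp [h i j])

lemma image_calA_conj :
    (fun X => Umat * X * Umat⁻¹) '' (calA : Set (Mat₄ ℂ)) = {Y | ∀ i j, (Y i j).im = 0} := by
  have hinv : Umat⁻¹ = Umatᴴ := inv_eq_left_inv Umat_conjTranspose_mul_self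
  ext Y
  rw [hinv, Set.mem_ofPred_eq, ← mem_range_mapMatrix_ofRealAm, ← map_calA_conjU]
  rfl

lemma finrank_calA : Module.finrank ℝ calA = 16 := by
  have hinj : Function.Injective (ofRealAm.mapMatrix : Mat₄ ℝ →ₐ[ℝ] Mat₄ ℂ) :=
    fun M N h => Matrix.ext fun i j => ofReal_injective (congrFun (congrFun h i) j)
  calc Module.finrank ℝ calA = Module.finrank ℝ (calA.map (conjU : Mat₄ ℂ →ₐ[ℝ] Mat₄ ℂ)) :=
        (AlgEquiv.subalgebraMap conjU calA).toLinearEquiv.finrank_eq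
    _ = Module.finrank ℝ (Mat₄ ℝ) := by
        rw [map_calA_conjU]
        exact (AlgEquiv.ofInjective _ hinj).toLinearEquiv.finrank_eq.symm
    _ = 16 := by simp [Module.finrank_matrix]

lemma Cmap_mulVec_of_swap {A : Mat₄ ℂ} (hA : ∀ ij mn, A ij.swap mn.swap = conj (A ij mn))
    (w : Fin 2 × Fin 2 → ℂ) : Cmap (A *ᵥ w) = A *ᵥ Cmap w := by
  funext ij
  simp only [Cmap, LinearMap.coe_mk, AddHom.coe_mk, mulVec, dotProduct, map_sum, map_mul]
  refine Fintype.sum_equiv (Equiv.prodComm _ _) _ _ fun mn => ?_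
  rw [← hA]
  rfl

lemma Amat_swap (k : ℝ) (ij mn : Fin 2 × Fin 2) :
    Amat k ij.swap mn.swap = conj (Amat k ij mn) := by
  simp [Amat, mul_comm]

lemma mulVec_mem_Wplus {A : Mat₄ ℂ} (hA : ∀ w, Cmap (A *ᵥ w) = A *ᵥ Cmap w)
    {w : Fin 2 × Fin 2 → ℂ} (hw : w ∈ Wplus) : A *ᵥ w ∈ Wplus := by
  rw [Wplus, LinearMap.mem_ker] at hw ⊢
  simpa [hA, mulVec_sub] using congrArg (A *ᵥ ·) hw

lemma mulVec_mem_Wminus {A : Mat₄ ℂ} (hA : ∀ w, Cmap (A *ᵥ w) = A *ᵥ Cmap w)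
    {w : Fin 2 × Fin 2 → ℂ} (hw : w ∈ Wminus) : A *ᵥ w ∈ Wminus := by
  rw [Wminus, LinearMap.mem_ker] at hw ⊢
  simpa [hA, mulVec_add] using congrArg (A *ᵥ ·) hw

lemma Umat_mulVec_Cmap (w : Fin 2 × Fin 2 → ℂ) (a : Fin 2 × Fin 2) :
    (Umat *ᵥ Cmap w) a = -I * conj ((Umat *ᵥ w) a) := by
  obtain ⟨i, j⟩ := a
  fin_cases i <;> fin_cases j <;>
    simp [Matrix.mulVec, dotProduct, Fintype.sum_prod_type, Umat, Cmap] <;>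
    ring_nf <;> simp [I_sq]

lemma Cmap_eq_iff {w v : Fin 2 × Fin 2 → ℂ} :
    Cmap w = v ↔ ∀ a, -I * conj ((Umat *ᵥ w) a) = (Umat *ᵥ v) a := by
  rw [← Umat_mulVec_injective.eq_iff, funext_iff]
  simp only [Umat_mulVec_Cmap]

noncomputable def realFrame (c : ℂ) : (Fin 2 × Fin 2 → ℝ) →ₗ[ℝ] (Fin 2 × Fin 2 → ℂ) where
  toFun x := Umatᴴ *ᵥ (c • fun a => (x a : ℂ))
  map_add' x y := by
    rw [← mulVec_add, ← smul_add]
    congr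
    funext a
    simp
  map_smul' r x := by
    rw [RingHom.id_apply, ← mulVec_smul, smul_comm]
    congr
    funext a
    simp

lemma Umat_mulVec_realFrame (c : ℂ) (x : Fin 2 × Fin 2 → ℝ) :
    Umat *ᵥ realFrame c x = c • fun a => (x a : ℂ) := by
  rw [realFrame, LinearMap.coe_mk, AddHom.coe_mk, mulVec_mulVec,
    Umat_mul_conjTranspose_self, one_mulVec]

lemma mem_range_realFrame_iff {c : ℂ} {w : Fin 2 × Fin 2 → ℂ} :
    w ∈ LinearMap.range (realFrame c) ↔ ∀ a, ∃ r : ℝ, (Umat *ᵥ w) a = c * r := by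
  constructor
  · rintro ⟨x, rfl⟩ a
    exact ⟨x a, by rw [Umat_mulVec_realFrame]; rfl⟩
  · intro h
    choose x hx using h
    refine ⟨x, Umat_mulVec_injective ?_⟩
    dsimp only
    rw [Umat_mulVec_realFrame]
    exact funext fun a => (hx a).symm

lemma Wplus_eq_range : Wplus = LinearMap.range (realFrame (1 - I)) := by
  ext w
  rw [Wplus, LinearMap.mem_ker, LinearMap.sub_apply, LinearMap.id_apply, sub_eq_zero,
    Cmap_eq_iff, mem_range_realFrame_iff]
  exact forall_congr' fun a => eq_comm.trans eq_neg_I_mul_conj_iff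

lemma Wminus_eq_range : Wminus = LinearMap.range (realFrame (1 + I)) := by
  ext w
  rw [Wminus, LinearMap.mem_ker, LinearMap.add_apply, LinearMap.id_apply, add_eq_zero_iff_eq_neg,
    Cmap_eq_iff, mem_range_realFrame_iff]
  refine forall_congr' fun a => ?_
  rw [mulVec_neg, Pi.neg_apply, neg_mul, neg_inj, eq_comm]
  exact eq_I_mul_conj_iff

lemma finrank_range_realFrame {c : ℂ} (hc : c ≠ 0) :
    Module.finrank ℝ (LinearMap.range (realFrame c)) = 4 := by
  have hinj : Function.Injective (realFrame c) := fun x y h => by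
    have h' := congrArg (Umat *ᵥ ·) h
    simp only [Umat_mulVec_realFrame] at h'
    funext a
    exact_mod_cast congrFun (smul_right_injective _ hc h') a
  rw [LinearMap.finrank_range_of_inj hinj]
  simp

lemma exists_mem_calA_mulVec_realFrame (c : ℂ) {x : Fin 2 × Fin 2 → ℝ} (hx : x ≠ 0)
    (y : Fin 2 × Fin 2 → ℝ) : ∃ X ∈ calA, X *ᵥ realFrame c x = realFrame c y := by
  obtain ⟨R, rfl⟩ := exists_mulVec_eq_of_ne_zero hx y
  have hR : ofRealAm.mapMatrix R ∈ calA.map (conjU : Mat₄ ℂ →ₐ[ℝ] Mat₄ ℂ) := by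
    rw [map_calA_conjU]
    exact ⟨R, rfl⟩
  obtain ⟨X, hX, hXR⟩ := Subalgebra.mem_map.mp hR
  rw [AlgEquiv.coe_toAlgHom] at hXR
  refine ⟨X, hX, Umat_mulVec_injective ?_⟩
  dsimp only
  rw [Umat_mulVec_mulVec, hXR, Umat_mulVec_realFrame, Umat_mulVec_realFrame, mulVec_smul]
  congr 1
  funext a
  exact (RingHom.map_mulVec ofRealHom R x a).symm

lemma eq_bot_or_eq_range_realFrame (c : ℂ) {S : Submodule ℝ (Fin 2 × Fin 2 → ℂ)}
    (hS : S ≤ LinearMap.range (realFrame c)) (hinv : ∀ k : ℝ, ∀ w ∈ S, Amat k *ᵥ w ∈ S) :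
    S = ⊥ ∨ S = LinearMap.range (realFrame c) := by
  refine Submodule.eq_bot_or_eq_of_forall_exists_mulVec_eq calA hS
    (fun X hX => mulVec_mem_of_mem_adjoin (by rintro _ ⟨k, rfl⟩; exact hinv k) hX) ?_
  rintro _ ⟨x, rfl⟩ hx _ ⟨y, rfl⟩
  exact exists_mem_calA_mulVec_realFrame c (by rintro rfl; exact hx (map_zero _)) y

/-- (1) `C` commutes with every `A(k)` as an ℝ-linear map on `ℂ⁴`, so the real eigenspaces
`W₊` and `W₋`, each of ℝ-dimension 4, are invariant under every `A(k)`;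
(2) the unital ℝ-subalgebra `𝒜` generated by `{A(k) : k ∈ ℝ}` has `dim_ℝ 𝒜 = 16`, and
`U·𝒜·U⁻¹ = Mat₄(ℝ) ⊂ Mat₄(ℂ)`;
(3) `𝒜` acts irreducibly on each of `W₊` and `W₋`. -/
theorem stmt1 :
    (∀ k : ℝ, ∀ w : Fin 2 × Fin 2 → ℂ,
      Cmap ((Amat k).mulVec w) = (Amat k).mulVec (Cmap w)) ∧
    Module.finrank ℝ Wplus = 4 ∧
    Module.finrank ℝ Wminus = 4 ∧
    (∀ k : ℝ, ∀ w ∈ Wplus, (Amat k).mulVec w ∈ Wplus) ∧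
    (∀ k : ℝ, ∀ w ∈ Wminus, (Amat k).mulVec w ∈ Wminus) ∧
    Module.finrank ℝ calA = 16 ∧
    ((fun X => Umat * X * Umat⁻¹) '' (calA : Set (Matrix (Fin 2 × Fin 2) (Fin 2 × Fin 2) ℂ)) =
      {Y : Matrix (Fin 2 × Fin 2) (Fin 2 × Fin 2) ℂ | ∀ ij mn, (Y ij mn).im = 0}) ∧
    (∀ S : Submodule ℝ (Fin 2 × Fin 2 → ℂ), S ≤ Wplus →
      (∀ k : ℝ, ∀ w ∈ S, (Amat k).mulVec w ∈ S) → S = ⊥ ∨ S = Wplus) ∧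
    (∀ S : Submodule ℝ (Fin 2 × Fin 2 → ℂ), S ≤ Wminus →
      (∀ k : ℝ, ∀ w ∈ S, (Amat k).mulVec w ∈ S) → S = ⊥ ∨ S = Wminus) := by
  have hcomm (k : ℝ) := Cmap_mulVec_of_swap (Amat_swap k)
  have h1I : (1 - I : ℂ) ≠ 0 := fun h => by simpa using congrArg im h
  have h1I' : (1 + I : ℂ) ≠ 0 := fun h => by simpa using congrArg im h
  refine ⟨hcomm, Wplus_eq_range ▸ finrank_range_realFrame h1I,
    Wminus_eq_range ▸ finrank_range_realFrame h1I', fun k _ hw => mulVec_mem_Wplus (hcomm k) hw,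
    fun k _ hw => mulVec_mem_Wminus (hcomm k) hw, finrank_calA, image_calA_conj,
    Wplus_eq_range ▸ fun S => eq_bot_or_eq_range_realFrame _,
    Wminus_eq_range ▸ fun S => eq_bot_or_eq_range_realFrame _⟩
end

section
/- Let ε > 0 be such that every entry of the matrix product A_U(k/λ)·A_U(k) is strictly positive for all k ∈ [0,ε] (this holds, for instance, for ε = 0.03). Fix k ∈ [0,ε] and a nonzero vector w₀ ∈ ℝ⁴ with nonnegative entries, and define for n ≥ 1 the iterates w_n := (A_U(k/λ^{2n−1})·A_U(k/λ^{2n−2}))·…·(A_U(k/λ)·A_U(k))·w₀. Then every w_n with n ≥ 1 has strictly positive entries, and there is a constant c > 0 (depending on w₀ and k) such that λ^{−4n}·w_n → c·w_PF as n → ∞, where w_PF = v_PF ⊗ v_PF with v_PF = (1/λ, 3/λ²)ᵗ the statistically normalised Perron–Frobenius eigenvector of M. -/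
open Filter

/-- `c(k) = cos(2πλk) + cos(2π(λ+1)k) + cos(2π(λ+2)k)`. -/
noncomputable def cfun (k : ℝ) : ℝ :=
  Real.cos (2 * Real.pi * lam * k) + Real.cos (2 * Real.pi * (lam + 1) * k) +
    Real.cos (2 * Real.pi * (lam + 2) * k)

/-- `s(k) = sin(2πλk) + sin(2π(λ+1)k) + sin(2π(λ+2)k)`. -/
noncomputable def sfun (k : ℝ) : ℝ :=
  Real.sin (2 * Real.pi * lam * k) + Real.sin (2 * Real.pi * (lam + 1) * k) +
    Real.sin (2 * Real.pi * (lam + 2) * k)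

/-- The real 4×4 matrix `A_U(k)`. -/
noncomputable def AU (k : ℝ) : Matrix (Fin 4) (Fin 4) ℝ :=
  !![1, 1, 1, 1;
     cfun k + sfun k, sfun k, cfun k, 0;
     cfun k - sfun k, cfun k, -sfun k, 0;
     cfun k ^ 2 + sfun k ^ 2, 0, 0, 0]

/-- `w_PF = v_PF ⊗ v_PF` with `v_PF = (1/λ, 3/λ²)ᵗ`, in lexicographic coordinates. -/
noncomputable def wPF : Fin 4 → ℝ :=
  ![1 / lam ^ 2, 3 / lam ^ 3, 3 / lam ^ 3, 9 / lam ^ 4]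

/-!
At `k = 0` the matrix `A_U(0) = M ⊗ M` has the left eigenvectors `ℓ_{α,β} = (α, 1) ⊗ (β, 1)`,
`α, β ∈ {λ, μ}` with `μ = 1 - λ` the other root of `x² = x + 3`, for the eigenvalues `αβ`; they
form a basis, dual to the right eigenvectors `(α, 3) ⊗ (β, 3)`. The pair `A_U(t/λ) A_U(t)` is
`A_U(0)² + O(|t|)`, and along `t = k λ^{-2n}` the error decays geometrically. For the normalised
iterates `v_n = λ^{-4n} w_n` the coordinate `ℓ_{λ,λ} · v_n` therefore changes by a summable
relative amount, so its logarithm converges and the limit is positive, while the three other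
coordinates are contracted by `(αβ)²/λ⁴ < 1` up to a geometric error and tend to `0`.
-/

open Matrix

lemma Real.abs_log_le_two_mul_of_abs_sub_one_le {r d : ℝ} (hr : |r - 1| ≤ d) (hd : d ≤ 1 / 2) :
    |Real.log r| ≤ 2 * d := by
  obtain ⟨hlo, hhi⟩ := abs_le.mp hr
  have hr0 : 0 < r := by linarith
  rw [abs_le]
  constructor
  · have h := Real.log_le_sub_one_of_pos (inv_pos.mpr hr0)
    rw [Real.log_inv] at h
    have : r⁻¹ - 1 ≤ 2 * d := by
      rw [inv_eq_one_div, div_sub_one hr0.ne', div_le_iff₀ hr0]; nlinarith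
    linarith
  · linarith [Real.log_le_sub_one_of_pos hr0]

lemma exists_pos_tendsto_of_abs_sub_le_mul {a d : ℕ → ℝ} (ha : ∀ n, 0 < a n) (hd : Summable d)
    (h : ∀ n, |a (n + 1) - a n| ≤ d n * a n) : ∃ L, 0 < L ∧ Tendsto a atTop (nhds L) := by
  have hlog : ∀ᶠ n in atTop, ‖dist (Real.log (a n)) (Real.log (a (n + 1)))‖ ≤ 2 * d n := by
    filter_upwards [hd.tendsto_atTop_zero.eventually (ge_mem_nhds (by norm_num : (0 : ℝ) < 1 / 2))]
      with n hn
    rw [Real.norm_eq_abs, abs_dist, Real.dist_eq, abs_sub_comm,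
      ← Real.log_div (ha _).ne' (ha n).ne']
    refine Real.abs_log_le_two_mul_of_abs_sub_one_le ?_ hn
    rw [div_sub_one (ha n).ne', abs_div, abs_of_pos (ha n), div_le_iff₀ (ha n)]
    exact h n
  obtain ⟨ℓ, hℓ⟩ := cauchySeq_tendsto_of_complete
    (cauchySeq_of_summable_dist ((hd.mul_left 2).of_norm_bounded_eventually_nat hlog))
  exact ⟨Real.exp ℓ, Real.exp_pos ℓ,
    ((Real.continuous_exp.tendsto ℓ).comp hℓ).congr fun n => Real.exp_log (ha n)⟩

lemma tendsto_zero_of_abs_succ_le {x : ℕ → ℝ} {θ σ C : ℝ} (hθ0 : 0 ≤ θ) (hθ : θ < 1)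
    (hσ0 : 0 ≤ σ) (hσ : σ < 1) (hC : 0 ≤ C) (h : ∀ n, |x (n + 1)| ≤ θ * |x n| + C * σ ^ n) :
    Tendsto x atTop (nhds 0) := by
  obtain ⟨ρ, hρ, hρ1⟩ := exists_between (max_lt hθ hσ)
  obtain ⟨hθρ, hσρ⟩ := max_lt_iff.mp hρ
  set K := |x 0| + C / (ρ - θ)
  have hCK : C ≤ (ρ - θ) * K := by
    have : (ρ - θ) * (C / (ρ - θ)) = C := mul_div_cancel₀ C (by linarith)
    nlinarith [abs_nonneg (x 0)]
  have hbound : ∀ n, |x n| ≤ K * ρ ^ n := by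
    intro n
    induction n with
    | zero => simp only [pow_zero, mul_one, K]; linarith [div_nonneg hC (by linarith : 0 ≤ ρ - θ)]
    | succ n ih =>
      have hρn : 0 ≤ ρ ^ n := pow_nonneg (hσ0.trans hσρ.le) n
      calc |x (n + 1)| ≤ θ * (K * ρ ^ n) + C * ρ ^ n :=
            (h n).trans (by gcongr)
        _ ≤ K * ρ ^ (n + 1) := by rw [pow_succ]; nlinarith
  refine squeeze_zero_norm hbound ?_
  simpa using (tendsto_pow_atTop_nhds_zero_of_lt_one (hσ0.trans hσρ.le) hρ1).const_mul K

section Entrywise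

variable {m n : Type*} [Fintype n]

lemma abs_dotProduct_le (u y : n → ℝ) : |u ⬝ᵥ y| ≤ (∑ i, |u i|) * ‖y‖ := by
  rw [dotProduct, Finset.sum_mul]
  refine (Finset.abs_sum_le_sum_abs _ _).trans (Finset.sum_le_sum fun i _ => ?_)
  rw [abs_mul]
  exact mul_le_mul_of_nonneg_left (norm_le_pi_norm y i) (abs_nonneg _)

lemma norm_mulVec_le_of_abs_le [Fintype m] {B : Matrix m n ℝ} {r : ℝ} (hr : 0 ≤ r)
    (hB : ∀ i j, |B i j| ≤ r) (x : n → ℝ) : ‖B *ᵥ x‖ ≤ Fintype.card n * r * ‖x‖ := by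
  refine (pi_norm_le_iff_of_nonneg (by positivity)).mpr fun i => ?_
  calc ‖(B *ᵥ x) i‖ ≤ (∑ j, |B i j|) * ‖x‖ := abs_dotProduct_le _ _
    _ ≤ (∑ _j : n, r) * ‖x‖ := by gcongr with j; exact hB i j
    _ = Fintype.card n * r * ‖x‖ := by simp

lemma abs_dotProduct_sub_le_of_vecMul_eq {B : Matrix n n ℝ}
    {ℓ : n → ℝ} {ρ : ℝ} (hℓ : ℓ ᵥ* B = ρ • ℓ) (x y : n → ℝ) :
    |ℓ ⬝ᵥ y - ρ * (ℓ ⬝ᵥ x)| ≤ (∑ i, |ℓ i|) * ‖y - B *ᵥ x‖ := by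
  have : ℓ ⬝ᵥ y - ρ * (ℓ ⬝ᵥ x) = ℓ ⬝ᵥ (y - B *ᵥ x) := by
    rw [dotProduct_sub, dotProduct_mulVec, hℓ, smul_dotProduct, smul_eq_mul]
  rw [this]
  exact abs_dotProduct_le _ _

lemma mulVec_pos_of_pos {B : Matrix m n ℝ} (hB : ∀ i j, 0 < B i j) {x : n → ℝ} (hx : 0 ≤ x)
    (hx0 : x ≠ 0) (i : m) : 0 < (B *ᵥ x) i := by
  obtain ⟨j, hj⟩ : ∃ j, x j ≠ 0 := Function.ne_iff.mp hx0
  exact Finset.sum_pos' (fun j _ => mul_nonneg (hB i j).le (hx j))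
    ⟨j, Finset.mem_univ j, mul_pos (hB i j) (lt_of_le_of_ne (hx j) (Ne.symm hj))⟩

end Entrywise

lemma orbit_succ_pos {n : Type*} [Fintype n] [Nonempty n] {B : ℕ → Matrix n n ℝ} {w : ℕ → n → ℝ}
    (hB : ∀ k i j, 0 < B k i j) (hw : ∀ k, w (k + 1) = B k *ᵥ w k) (hw0 : 0 ≤ w 0)
    (hw0' : w 0 ≠ 0) (k : ℕ) (i : n) : 0 < w (k + 1) i := by
  induction k generalizing i with
  | zero => rw [hw]; exact mulVec_pos_of_pos (hB 0) hw0 hw0' i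
  | succ k ih =>
    rw [hw]
    refine mulVec_pos_of_pos (hB _) (fun j => (ih j).le) ?_ i
    exact Function.ne_iff.mpr ⟨Classical.arbitrary n, (ih _).ne'⟩

lemma lam_sq : lam ^ 2 = lam + 3 := by
  rw [lam, div_pow, add_sq, Real.sq_sqrt (by norm_num)]; ring

lemma one_lt_lam : 1 < lam := by
  have : 1 < Real.sqrt 13 := by rw [Real.lt_sqrt zero_le_one]; norm_num
  rw [lam]; linarith

lemma lam_pos : 0 < lam := one_pos.trans one_lt_lam

lemma lam_lt_three : lam < 3 := by nlinarith [lam_sq, one_lt_lam]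

noncomputable def mu : ℝ := 1 - lam

lemma mu_sq : mu ^ 2 = mu + 3 := by rw [mu]; linear_combination lam_sq

lemma lam_mul_mu : lam * mu = -3 := by rw [mu]; linear_combination -lam_sq

lemma abs_mu_lt_lam : |mu| < lam := by
  rw [mu, abs_of_neg (by linarith [one_lt_lam])]; linarith

lemma sq_lam_mul_mu_lt : (lam * mu) ^ 2 < lam ^ 4 := by
  rw [lam_mul_mu]; nlinarith [lam_sq, lam_pos]

lemma sq_mu_mul_mu_lt : (mu * mu) ^ 2 < lam ^ 4 := by
  have hmu2 : mu ^ 2 < lam ^ 2 := by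
    rw [← sq_abs]; exact pow_lt_pow_left₀ abs_mu_lt_lam (abs_nonneg _) two_ne_zero
  calc (mu * mu) ^ 2 = (mu ^ 2) ^ 2 := by ring
    _ < (lam ^ 2) ^ 2 := pow_lt_pow_left₀ hmu2 (sq_nonneg _) two_ne_zero
    _ = lam ^ 4 := by ring

lemma abs_cos_mul_sub_one_le (a t : ℝ) : |Real.cos (a * t) - 1| ≤ |a| * |t| := by
  simpa [abs_mul] using Real.abs_cos_sub_cos_le (a * t) 0

lemma abs_sin_mul_le (a t : ℝ) : |Real.sin (a * t)| ≤ |a| * |t| :=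
  Real.abs_sin_le_abs.trans (abs_mul a t).le

lemma abs_cfun_le (t : ℝ) : |cfun t| ≤ 3 := by
  refine (abs_add_three _ _ _).trans ?_
  linarith [Real.abs_cos_le_one (2 * Real.pi * lam * t),
    Real.abs_cos_le_one (2 * Real.pi * (lam + 1) * t),
    Real.abs_cos_le_one (2 * Real.pi * (lam + 2) * t)]

lemma abs_sfun_le (t : ℝ) : |sfun t| ≤ 3 := by
  refine (abs_add_three _ _ _).trans ?_
  linarith [Real.abs_sin_le_one (2 * Real.pi * lam * t),
    Real.abs_sin_le_one (2 * Real.pi * (lam + 1) * t),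
    Real.abs_sin_le_one (2 * Real.pi * (lam + 2) * t)]

lemma exists_lipschitz_cfun_sfun :
    ∃ κ, 0 ≤ κ ∧ ∀ t, |cfun t - 3| ≤ κ * |t| ∧ |sfun t| ≤ κ * |t| := by
  refine ⟨|2 * Real.pi * lam| + |2 * Real.pi * (lam + 1)| + |2 * Real.pi * (lam + 2)|,
    by positivity, fun t => ⟨?_, ?_⟩⟩
  · rw [show cfun t - 3 = Real.cos (2 * Real.pi * lam * t) - 1 +
      (Real.cos (2 * Real.pi * (lam + 1) * t) - 1) + (Real.cos (2 * Real.pi * (lam + 2) * t) - 1)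
      by rw [cfun]; ring]
    refine (abs_add_three _ _ _).trans ?_
    linarith [abs_cos_mul_sub_one_le (2 * Real.pi * lam) t,
      abs_cos_mul_sub_one_le (2 * Real.pi * (lam + 1)) t,
      abs_cos_mul_sub_one_le (2 * Real.pi * (lam + 2)) t]
  · refine (abs_add_three _ _ _).trans ?_
    linarith [abs_sin_mul_le (2 * Real.pi * lam) t, abs_sin_mul_le (2 * Real.pi * (lam + 1)) t,
      abs_sin_mul_le (2 * Real.pi * (lam + 2)) t]

lemma cfun_zero : cfun 0 = 3 := by norm_num [cfun]

lemma sfun_zero : sfun 0 = 0 := by simp [sfun]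

lemma abs_AU_le (t : ℝ) (i j : Fin 4) : |AU t i j| ≤ 18 := by
  obtain ⟨hc, hc'⟩ := abs_le.mp (abs_cfun_le t)
  obtain ⟨hs, hs'⟩ := abs_le.mp (abs_sfun_le t)
  fin_cases i <;> fin_cases j <;> simp [AU, abs_le] <;> constructor <;> nlinarith

lemma exists_abs_AU_sub_AU_zero_le : ∃ κ, 0 ≤ κ ∧ ∀ t i j, |(AU t - AU 0) i j| ≤ κ * |t| := by
  obtain ⟨κ, hκ, hcs⟩ := exists_lipschitz_cfun_sfun
  refine ⟨9 * κ, by positivity, fun t i j => ?_⟩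
  obtain ⟨hc, hs⟩ := hcs t
  have hc6 : |cfun t + 3| ≤ 6 := (abs_add_le _ _).trans (by norm_num; linarith [abs_cfun_le t])
  have hsq : |cfun t ^ 2 + sfun t ^ 2 - 3 ^ 2| ≤ 9 * κ * |t| := calc
    _ = |(cfun t - 3) * (cfun t + 3) + sfun t * sfun t| := by congr 1; ring
    _ ≤ |cfun t - 3| * |cfun t + 3| + |sfun t| * |sfun t| := by
      rw [← abs_mul, ← abs_mul]; exact abs_add_le _ _
    _ ≤ κ * |t| * 6 + κ * |t| * 3 := by gcongr; linarith [abs_sfun_le t]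
    _ = 9 * κ * |t| := by ring
  rw [abs_le] at hc hs
  fin_cases i <;> fin_cases j <;> simp [AU, cfun_zero, sfun_zero] <;>
    first | positivity | exact hsq | (rw [abs_le]; constructor <;> nlinarith [abs_nonneg t])

lemma exists_norm_AU_mul_AU_sub_mulVec_le :
    ∃ C, 0 ≤ C ∧ ∀ s t (x : Fin 4 → ℝ),
      ‖(AU s * AU t - AU 0 * AU 0) *ᵥ x‖ ≤ C * (|s| + |t|) * ‖x‖ := by
  obtain ⟨κ, hκ, hAU⟩ := exists_abs_AU_sub_AU_zero_le
  have hbound (t : ℝ) (x : Fin 4 → ℝ) : ‖AU t *ᵥ x‖ ≤ 72 * ‖x‖ := by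
    have := norm_mulVec_le_of_abs_le (by norm_num) (abs_AU_le t) x
    norm_num at this; linarith
  have hdiff (t : ℝ) (x : Fin 4 → ℝ) : ‖(AU t - AU 0) *ᵥ x‖ ≤ 4 * κ * |t| * ‖x‖ := by
    simpa [mul_assoc] using norm_mulVec_le_of_abs_le (by positivity) (hAU t) x
  refine ⟨288 * κ, by positivity, fun s t x => ?_⟩
  have hsplit : AU s * AU t - AU 0 * AU 0 = (AU s - AU 0) * AU t + AU 0 * (AU t - AU 0) := by
    noncomm_ring
  rw [hsplit, add_mulVec, ← mulVec_mulVec, ← mulVec_mulVec]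
  calc _ ≤ ‖(AU s - AU 0) *ᵥ (AU t *ᵥ x)‖ + ‖AU 0 *ᵥ ((AU t - AU 0) *ᵥ x)‖ := norm_add_le _ _
    _ ≤ 4 * κ * |s| * (72 * ‖x‖) + 72 * (4 * κ * |t| * ‖x‖) := by
      gcongr
      · exact (hdiff s _).trans (by gcongr; exact hbound t x)
      · exact (hbound 0 _).trans (by gcongr; exact hdiff t x)
    _ = 288 * κ * (|s| + |t|) * ‖x‖ := by ring

def ell (a b : ℝ) : Fin 4 → ℝ := ![a * b, a, b, 1]

-- `(α + 6) * (β + 6)` is `ℓ_{α,β} ⬝ᵥ ((α, 3) ⊗ (β, 3))` when `α² = α + 3`, `β² = β + 3`.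
noncomputable def dualVec (a b : ℝ) : Fin 4 → ℝ :=
  ((a + 6) * (b + 6))⁻¹ • ![a * b, 3 * a, 3 * b, 9]

lemma ell_vecMul_AU_zero {a b : ℝ} (ha : a ^ 2 = a + 3) (hb : b ^ 2 = b + 3) :
    ell a b ᵥ* AU 0 = (a * b) • ell a b := by
  ext j
  fin_cases j <;> simp [ell, AU, vecMul, dotProduct, Fin.sum_univ_four, cfun_zero, sfun_zero]
  all_goals grind

lemma eq_sum_ell_dotProduct_smul_dualVec (x : Fin 4 → ℝ) :
    x = (ell lam lam ⬝ᵥ x) • dualVec lam lam + (ell lam mu ⬝ᵥ x) • dualVec lam mu +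
      (ell mu lam ⬝ᵥ x) • dualVec mu lam + (ell mu mu ⬝ᵥ x) • dualVec mu mu := by
  have h6 : lam + 6 ≠ 0 := by linarith [lam_pos]
  have h7 : mu + 6 ≠ 0 := by rw [mu]; linarith [lam_lt_three]
  ext i
  fin_cases i <;> simp [ell, dualVec, dotProduct, Fin.sum_univ_four] <;> field_simp <;> rw [mu] <;>
    grind [lam_sq]

lemma dualVec_lam_lam : dualVec lam lam = (lam ^ 4 / (lam + 6) ^ 2) • wPF := by
  have h0 := lam_pos.ne'
  ext i
  fin_cases i <;> simp [dualVec, wPF] <;> field_simp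

lemma ell_vecMul_AU_zero_sq {a b : ℝ} (ha : a ^ 2 = a + 3) (hb : b ^ 2 = b + 3) :
    ell a b ᵥ* (AU 0 * AU 0) = (a * b) ^ 2 • ell a b := by
  rw [← vecMul_vecMul, ell_vecMul_AU_zero ha hb, smul_vecMul, ell_vecMul_AU_zero ha hb, smul_smul,
    sq]

lemma norm_le_ell_lam_dotProduct {x : Fin 4 → ℝ} (hx : 0 ≤ x) : ‖x‖ ≤ ell lam lam ⬝ᵥ x := by
  have h0 : 0 ≤ x 0 := hx 0
  have h1 : 0 ≤ x 1 := hx 1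
  have h2 : 0 ≤ x 2 := hx 2
  have h3 : 0 ≤ x 3 := hx 3
  have hl : 0 ≤ lam - 1 := by linarith [one_lt_lam]
  have hl2 : 0 ≤ lam * lam - 1 := by nlinarith
  have hell : ell lam lam ⬝ᵥ x = lam * lam * x 0 + lam * x 1 + lam * x 2 + x 3 := by
    simp [ell, dotProduct, Fin.sum_univ_four]
  rw [hell]
  refine (pi_norm_le_iff_of_nonneg (by have := lam_pos; positivity)).mpr fun i => ?_
  rw [Real.norm_eq_abs, abs_of_nonneg (hx i)]
  fin_cases i <;> simp <;>
    nlinarith [mul_nonneg hl2 h0, mul_nonneg hl h1, mul_nonneg hl h2]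

section PerturbedOrbit

variable {v : ℕ → Fin 4 → ℝ} {C q : ℝ}

lemma abs_ell_dotProduct_step_le {a b : ℝ} (ha : a ^ 2 = a + 3) (hb : b ^ 2 = b + 3)
    (hv : ∀ n, 0 ≤ v n) (hC : 0 ≤ C) (hq0 : 0 ≤ q)
    (hstep : ∀ n, ‖lam ^ 4 • v (n + 1) - (AU 0 * AU 0) *ᵥ v n‖ ≤ C * q ^ n * ‖v n‖) (n : ℕ) :
    |lam ^ 4 * (ell a b ⬝ᵥ v (n + 1)) - (a * b) ^ 2 * (ell a b ⬝ᵥ v n)| ≤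
      (∑ i, |ell a b i|) * C * q ^ n * (ell lam lam ⬝ᵥ v n) := by
  rw [← smul_eq_mul, ← dotProduct_smul]
  calc _ ≤ (∑ i, |ell a b i|) * ‖lam ^ 4 • v (n + 1) - (AU 0 * AU 0) *ᵥ v n‖ :=
        abs_dotProduct_sub_le_of_vecMul_eq (ell_vecMul_AU_zero_sq ha hb) _ _
    _ ≤ (∑ i, |ell a b i|) * (C * q ^ n * (ell lam lam ⬝ᵥ v n)) := by
        gcongr
        exact (hstep n).trans (by gcongr; exact norm_le_ell_lam_dotProduct (hv n))
    _ = _ := by ring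

lemma exists_pos_tendsto_ell_lam_lam_dotProduct (hv : ∀ n, 0 ≤ v n) (hv0 : ∀ n, v n ≠ 0)
    (hC : 0 ≤ C) (hq0 : 0 ≤ q) (hq : q < 1)
    (hstep : ∀ n, ‖lam ^ 4 • v (n + 1) - (AU 0 * AU 0) *ᵥ v n‖ ≤ C * q ^ n * ‖v n‖) :
    ∃ L, 0 < L ∧ Tendsto (fun n => ell lam lam ⬝ᵥ v n) atTop (nhds L) := by
  have hl4 : 0 < lam ^ 4 := pow_pos lam_pos 4
  refine exists_pos_tendsto_of_abs_sub_le_mul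
    (fun n => (norm_pos_iff.mpr (hv0 n)).trans_le (norm_le_ell_lam_dotProduct (hv n)))
    (((summable_geometric_of_lt_one hq0 hq).mul_left ((∑ i, |ell lam lam i|) * C / lam ^ 4)))
    fun n => ?_
  have h := abs_ell_dotProduct_step_le lam_sq lam_sq hv hC hq0 hstep n
  rw [show (lam * lam) ^ 2 = lam ^ 4 by ring, ← mul_sub, abs_mul, abs_of_pos hl4] at h
  rw [div_mul_eq_mul_div, div_mul_eq_mul_div, le_div_iff₀ hl4]
  linarith

lemma tendsto_ell_dotProduct_zero {a b B : ℝ} (ha : a ^ 2 = a + 3) (hb : b ^ 2 = b + 3)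
    (hab : (a * b) ^ 2 < lam ^ 4) (hv : ∀ n, 0 ≤ v n) (hC : 0 ≤ C) (hq0 : 0 ≤ q) (hq : q < 1)
    (hstep : ∀ n, ‖lam ^ 4 • v (n + 1) - (AU 0 * AU 0) *ᵥ v n‖ ≤ C * q ^ n * ‖v n‖)
    (hB : ∀ n, ell lam lam ⬝ᵥ v n ≤ B) :
    Tendsto (fun n => ell a b ⬝ᵥ v n) atTop (nhds 0) := by
  have hl4 : 0 < lam ^ 4 := pow_pos lam_pos 4
  have hB0 : 0 ≤ B := (norm_nonneg _).trans ((norm_le_ell_lam_dotProduct (hv 0)).trans (hB 0))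
  refine tendsto_zero_of_abs_succ_le (θ := (a * b) ^ 2 / lam ^ 4) (σ := q)
    (C := (∑ i, |ell a b i|) * C * B / lam ^ 4) (by positivity) ((div_lt_one hl4).mpr hab) hq0 hq
    (by positivity) fun n => ?_
  have h := abs_ell_dotProduct_step_le ha hb hv hC hq0 hstep n
  have h' : (∑ i, |ell a b i|) * C * q ^ n * (ell lam lam ⬝ᵥ v n) ≤
      (∑ i, |ell a b i|) * C * q ^ n * B := by gcongr; exact hB n
  rw [div_mul_eq_mul_div, div_mul_eq_mul_div, ← add_div, le_div_iff₀ hl4]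
  have := abs_sub_abs_le_abs_sub (lam ^ 4 * (ell a b ⬝ᵥ v (n + 1))) ((a * b) ^ 2 * (ell a b ⬝ᵥ v n))
  rw [abs_mul, abs_mul, abs_of_pos hl4, abs_of_nonneg (sq_nonneg (a * b))] at this
  nlinarith

lemma exists_pos_tendsto_smul_wPF (hv : ∀ n, 0 ≤ v n) (hv0 : ∀ n, v n ≠ 0)
    (hC : 0 ≤ C) (hq0 : 0 ≤ q) (hq : q < 1)
    (hstep : ∀ n, ‖lam ^ 4 • v (n + 1) - (AU 0 * AU 0) *ᵥ v n‖ ≤ C * q ^ n * ‖v n‖) :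
    ∃ c : ℝ, 0 < c ∧ Tendsto v atTop (nhds (c • wPF)) := by
  obtain ⟨L, hL, hlim⟩ := exists_pos_tendsto_ell_lam_lam_dotProduct hv hv0 hC hq0 hq hstep
  obtain ⟨B, hB⟩ := hlim.bddAbove_range
  have hB' : ∀ n, ell lam lam ⬝ᵥ v n ≤ B := fun n => hB ⟨n, rfl⟩
  refine ⟨L * (lam ^ 4 / (lam + 6) ^ 2), by have := lam_pos; positivity, ?_⟩
  rw [mul_smul, ← dualVec_lam_lam]
  have hzero {a b : ℝ} (ha : a ^ 2 = a + 3) (hb : b ^ 2 = b + 3) (hab : (a * b) ^ 2 < lam ^ 4) :=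
    tendsto_ell_dotProduct_zero ha hb hab hv hC hq0 hq hstep hB'
  have hsum := (((hlim.smul_const (dualVec lam lam)).add
    ((hzero lam_sq mu_sq sq_lam_mul_mu_lt).smul_const (dualVec lam mu))).add
    ((hzero mu_sq lam_sq (mul_comm lam mu ▸ sq_lam_mul_mu_lt)).smul_const (dualVec mu lam))).add
    ((hzero mu_sq mu_sq sq_mu_mul_mu_lt).smul_const (dualVec mu mu))
  simpa only [zero_smul, add_zero, ← eq_sum_ell_dotProduct_smul_dualVec] using hsum

end PerturbedOrbit

lemma exists_pos_tendsto_orbit {k : ℝ} {w : ℕ → Fin 4 → ℝ}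
    (hw : ∀ n, w (n + 1) = (AU (k / lam ^ (2 * n + 1)) * AU (k / lam ^ (2 * n))) *ᵥ w n)
    (hwnn : ∀ n, 0 ≤ w n) (hw0 : ∀ n, w n ≠ 0) :
    ∃ c : ℝ, 0 < c ∧ Tendsto (fun n => (lam ^ (4 * n))⁻¹ • w n) atTop (nhds (c • wPF)) := by
  obtain ⟨C, hC, hAU⟩ := exists_norm_AU_mul_AU_sub_mulVec_le
  have hl := lam_pos
  have hl1 : lam⁻¹ < 1 := inv_lt_one_of_one_lt₀ one_lt_lam
  have habs (j : ℕ) : |k / lam ^ j| = |k| * lam⁻¹ ^ j := by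
    rw [abs_div, abs_of_pos (pow_pos hl j), div_eq_mul_inv, inv_pow]
  refine exists_pos_tendsto_smul_wPF (C := C * (2 * |k|)) (q := lam⁻¹ ^ 2)
    (fun n => smul_nonneg (by positivity) (hwnn n)) (fun n => smul_ne_zero (by positivity) (hw0 n))
    (by positivity) (by positivity) (pow_lt_one₀ (by positivity) hl1 two_ne_zero) fun n => ?_
  have hsmul : lam ^ 4 • (lam ^ (4 * (n + 1)))⁻¹ • w (n + 1) =
      (AU (k / lam ^ (2 * n + 1)) * AU (k / lam ^ (2 * n))) *ᵥ (lam ^ (4 * n))⁻¹ • w n := by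
    rw [hw, mulVec_smul, smul_smul]
    congr 1
    rw [mul_add, pow_add]
    field_simp
  have hs : |k / lam ^ (2 * n + 1)| ≤ |k| * (lam⁻¹ ^ 2) ^ n := by
    rw [habs, ← pow_mul]
    exact mul_le_mul_of_nonneg_left (pow_le_pow_of_le_one (by positivity) hl1.le (Nat.le_succ _))
      (abs_nonneg k)
  have ht : |k / lam ^ (2 * n)| = |k| * (lam⁻¹ ^ 2) ^ n := by rw [habs, ← pow_mul]
  rw [hsmul, ← sub_mulVec]
  calc _ ≤ C * (|k / lam ^ (2 * n + 1)| + |k / lam ^ (2 * n)|) * ‖(lam ^ (4 * n))⁻¹ • w n‖ :=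
        hAU _ _ _
    _ ≤ C * (2 * |k| * (lam⁻¹ ^ 2) ^ n) * ‖(lam ^ (4 * n))⁻¹ • w n‖ := by gcongr; linarith
    _ = _ := by ring

theorem stmt2_general (ε : ℝ)
    (hpos : ∀ k ∈ Set.Icc (0 : ℝ) ε, ∀ i j : Fin 4, 0 < (AU (k / lam) * AU k) i j)
    (k : ℝ) (hk : k ∈ Set.Icc (0 : ℝ) ε)
    (w0 : Fin 4 → ℝ) (hw0 : w0 ≠ 0) (hw0nn : ∀ i, 0 ≤ w0 i)
    (w : ℕ → Fin 4 → ℝ) (hw_zero : w 0 = w0)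
    (hw : ∀ n : ℕ,
      w (n + 1) = (AU (k / lam ^ (2 * n + 1)) * AU (k / lam ^ (2 * n))).mulVec (w n)) :
    (∀ n : ℕ, 1 ≤ n → ∀ i : Fin 4, 0 < w n i) ∧
    ∃ c : ℝ, 0 < c ∧
      Tendsto (fun n : ℕ => (lam ^ (4 * n))⁻¹ • w n) atTop (nhds (c • wPF)) := by
  have hB : ∀ n i j, 0 < (AU (k / lam ^ (2 * n + 1)) * AU (k / lam ^ (2 * n))) i j := by
    intro n
    rw [pow_succ, ← div_div]
    exact hpos _ ⟨div_nonneg hk.1 (pow_nonneg lam_pos.le _),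
      (div_le_self hk.1 (one_le_pow₀ one_lt_lam.le)).trans hk.2⟩
  subst hw_zero
  have hsucc := orbit_succ_pos hB hw hw0nn hw0
  have hwnn : ∀ n, 0 ≤ w n := by
    rintro (_ | n)
    exacts [hw0nn, fun i => (hsucc n i).le]
  have hwne : ∀ n, w n ≠ 0 := by
    rintro (_ | n)
    exacts [hw0, Function.ne_iff.mpr ⟨0, (hsucc n 0).ne'⟩]
  refine ⟨fun n hn => ?_, exists_pos_tendsto_orbit hw hwnn hwne⟩
  obtain ⟨m, rfl⟩ := Nat.exists_eq_add_of_le' hn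
  exact hsucc m

/-- Let `ε > 0` be such that every entry of `A_U(k/λ)·A_U(k)` is strictly positive for all
`k ∈ [0,ε]`. Fix `k ∈ [0,ε]` and a nonzero nonnegative `w₀ ∈ ℝ⁴`, and define the iterates
`w_n := (A_U(k/λ^{2n−1})·A_U(k/λ^{2n−2}))·…·(A_U(k/λ)·A_U(k))·w₀`. Then every `w_n` with
`n ≥ 1` has strictly positive entries, and there is a constant `c > 0` (depending on `w₀`
and `k`) such that `λ^{−4n}·w_n → c·w_PF` as `n → ∞`. -/
theorem stmt2 (ε : ℝ) (hε : 0 < ε)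
    (hpos : ∀ k ∈ Set.Icc (0 : ℝ) ε, ∀ i j : Fin 4, 0 < (AU (k / lam) * AU k) i j)
    (k : ℝ) (hk : k ∈ Set.Icc (0 : ℝ) ε)
    (w0 : Fin 4 → ℝ) (hw0 : w0 ≠ 0) (hw0nn : ∀ i, 0 ≤ w0 i)
    (w : ℕ → Fin 4 → ℝ) (hw_zero : w 0 = w0)
    (hw : ∀ n : ℕ,
      w (n + 1) = (AU (k / lam ^ (2 * n + 1)) * AU (k / lam ^ (2 * n))).mulVec (w n)) :
    (∀ n : ℕ, 1 ≤ n → ∀ i : Fin 4, 0 < w n i) ∧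
    ∃ c : ℝ, 0 < c ∧
      Tendsto (fun n : ℕ => (lam ^ (4 * n))⁻¹ • w n) atTop (nhds (c • wPF)) :=
  stmt2_general ε hpos k hk w0 hw0 hw0nn w hw_zero hw
end

section
/- Let k ∈ ℝ be such that p(λᵐk) ≠ 0 for all integers m ≥ 0 and such that lim_{n→∞} (1/n)·∑_{ℓ=0}^{n−1} log|p(λˡk)| = 0 (a condition holding for Lebesgue-almost every k). Define χ̃₁(k) := −limsup_{n→∞} (1/n)·log‖B(k)·B(λk)·…·B(λⁿ⁻¹k)‖_F and χ̃₂(k) := limsup_{n→∞} (1/n)·log‖B(λⁿ⁻¹k)⁻¹·…·B(λk)⁻¹·B(k)⁻¹‖_F, where ‖·‖_F is the Frobenius norm. Then χ̃₁(k) + χ̃₂(k) = 0. Moreover, if the sequence (1/n)·log‖B(k)·B(λk)·…·B(λⁿ⁻¹k)‖_F converges as n → ∞, then both χ̃₁(k) and χ̃₂(k) exist as limits (not merely as limsups). -/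
/-! For a `2 × 2` matrix `‖A⁻¹‖_F = ‖A‖_F / |det A|`, and `det B⁽ⁿ⁾(k) = ± ∏_{ℓ<n} p(λˡk)`, so
`(1/n) log ‖(B⁽ⁿ⁾)⁻¹‖_F` is `(1/n) log ‖B⁽ⁿ⁾‖_F` minus the ergodic average of `log |p|`, which
tends to `0`. The forward sequence is bounded: above since `‖B(x)‖_F ≤ √11`, below since
`|det A| ≤ ‖A‖_F²`. A vanishing bounded perturbation changes neither the limsup nor the limit. -/

open Filter

/-- The outward matrix product `B⁽ⁿ⁾(k) = B(k)·B(λk)·…·B(λⁿ⁻¹k)`. -/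
noncomputable def Bout (k : ℝ) : ℕ → Matrix (Fin 2) (Fin 2) ℂ
  | 0 => 1
  | n + 1 => Bout k n * Bmat (lam ^ n * k)

/-- The Frobenius norm of a complex 2×2 matrix. -/
noncomputable def frobNorm (M : Matrix (Fin 2) (Fin 2) ℂ) : ℝ :=
  Real.sqrt (∑ i : Fin 2, ∑ j : Fin 2, ‖M i j‖ ^ 2)

/-- `χ̃₁(k) = −limsup_n (1/n)·log‖B⁽ⁿ⁾(k)‖_F`. -/
noncomputable def chi1 (k : ℝ) : ℝ :=
  -(limsup (fun n : ℕ => (n : ℝ)⁻¹ * Real.log (frobNorm (Bout k n))) atTop)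

/-- `χ̃₂(k) = limsup_n (1/n)·log‖B(λⁿ⁻¹k)⁻¹·…·B(k)⁻¹‖_F = limsup_n (1/n)·log‖(B⁽ⁿ⁾(k))⁻¹‖_F`. -/
noncomputable def chi2 (k : ℝ) : ℝ :=
  limsup (fun n : ℕ => (n : ℝ)⁻¹ * Real.log (frobNorm ((Bout k n)⁻¹))) atTop

open Real
open scoped Matrix.Norms.Frobenius Topology

namespace Matrix

variable {m n α 𝕜 : Type*} [Fintype m] [Fintype n]

theorem frobenius_norm_sq [SeminormedAddCommGroup α] (A : Matrix m n α) :
    ‖A‖ ^ 2 = ∑ i, ∑ j, ‖A i j‖ ^ 2 := by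
  rw [frobenius_norm_def, ← sqrt_eq_rpow, sq_sqrt (by positivity)]
  simp_rw [rpow_two]

theorem frobenius_norm_adjugate_fin_two [SeminormedCommRing α] (A : Matrix (Fin 2) (Fin 2) α) :
    ‖adjugate A‖ = ‖A‖ := by
  refine (sq_eq_sq₀ (norm_nonneg _) (norm_nonneg _)).1 ?_
  simp only [frobenius_norm_sq, adjugate_fin_two, Fin.sum_univ_two, of_apply, cons_val',
    cons_val_zero, cons_val_one, empty_val', cons_val_fin_one, norm_neg]
  ring

theorem frobenius_norm_inv_fin_two [NormedField 𝕜] (A : Matrix (Fin 2) (Fin 2) 𝕜) :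
    ‖A⁻¹‖ = ‖A‖ / ‖A.det‖ := by
  rw [inv_def, Ring.inverse_eq_inv', norm_smul, frobenius_norm_adjugate_fin_two, norm_inv,
    inv_mul_eq_div]

theorem norm_det_fin_two_le_sq [SeminormedCommRing α] (A : Matrix (Fin 2) (Fin 2) α) :
    ‖A.det‖ ≤ ‖A‖ ^ 2 := by
  have h₀ : ‖A 0 0 * A 1 1‖ ≤ ‖A 0 0‖ ^ 2 + ‖A 1 1‖ ^ 2 :=
    (norm_mul_le _ _).trans (by nlinarith [sq_nonneg (‖A 0 0‖ - ‖A 1 1‖)])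
  have h₁ : ‖A 0 1 * A 1 0‖ ≤ ‖A 0 1‖ ^ 2 + ‖A 1 0‖ ^ 2 :=
    (norm_mul_le _ _).trans (by nlinarith [sq_nonneg (‖A 0 1‖ - ‖A 1 0‖)])
  rw [det_fin_two, frobenius_norm_sq]
  simp only [Fin.sum_univ_two]
  linarith [norm_sub_le (A 0 0 * A 1 1) (A 0 1 * A 1 0)]

end Matrix

theorem Filter.limsup_add_of_right_tendsto_zero {ι : Type*} {l : Filter ι} [l.NeBot] {u v : ι → ℝ}
    (hu : IsBoundedUnder (· ≤ ·) l u) (hu' : IsBoundedUnder (· ≥ ·) l u)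
    (hv : Tendsto v l (𝓝 0)) :
    limsup (u + v) l = limsup u l := by
  refine le_antisymm ?_ ?_
  · simpa [hv.limsup_eq] using
      limsup_add_le hu' hu hv.isBoundedUnder_ge.isCoboundedUnder_le hv.isBoundedUnder_le
  · simpa [hv.liminf_eq] using
      le_limsup_add hu hu'.isCoboundedUnder_le hv.isBoundedUnder_le hv.isBoundedUnder_ge

theorem isBoundedUnder_le_inv_mul_log {x : ℕ → ℝ} {C r : ℝ} (hC : 0 < C) (hr : 0 < r)
    (hx₀ : ∀ n, 0 < x n) (hx : ∀ n, x n ≤ C * r ^ n) :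
    IsBoundedUnder (· ≤ ·) atTop fun n : ℕ => (n : ℝ)⁻¹ * log (x n) := by
  have hmajor : Tendsto (fun n : ℕ => (n : ℝ)⁻¹ * log (C * r ^ n)) atTop (𝓝 (log r)) := by
    have h := (tendsto_inv_atTop_nhds_zero_nat (𝕜 := ℝ)).mul_const (log C) |>.add_const (log r)
    rw [zero_mul, zero_add] at h
    refine h.congr' ((eventually_ne_atTop 0).mono fun n hn => ?_)
    dsimp only
    rw [log_mul hC.ne' (pow_ne_zero _ hr.ne'), log_pow]
    field_simp
  exact hmajor.isBoundedUnder_le.mono_le (Eventually.of_forall fun n =>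
    mul_le_mul_of_nonneg_left (log_le_log (hx₀ n) (hx n)) (by positivity))

theorem frobNorm_eq_norm (M : Matrix (Fin 2) (Fin 2) ℂ) : frobNorm M = ‖M‖ := by
  rw [frobNorm, ← Matrix.frobenius_norm_sq, sqrt_sq (norm_nonneg _)]

theorem norm_pfun_le (x : ℝ) : ‖pfun x‖ ≤ 3 := by
  refine (norm_add₃_le ..).trans ?_
  simp only [Complex.norm_exp_ofReal_mul_I]
  norm_num

theorem det_Bmat (x : ℝ) : (Bmat x).det = -pfun x := by
  simp [Bmat, Matrix.det_fin_two_of]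

theorem norm_Bmat_le (x : ℝ) : ‖Bmat x‖ ≤ √11 := by
  rw [← frobNorm_eq_norm, frobNorm]
  gcongr
  have := norm_pfun_le x
  simp only [Bmat, Matrix.of_apply, Matrix.cons_val', Matrix.cons_val_fin_one, Fin.sum_univ_two,
    Matrix.cons_val_zero, Matrix.cons_val_one, norm_one, norm_zero]
  nlinarith [norm_nonneg (pfun x)]

theorem norm_Bout_le (k : ℝ) (n : ℕ) : ‖Bout k n‖ ≤ √2 * √11 ^ n := by
  induction n with
  | zero => norm_num [Bout, ← frobNorm_eq_norm, frobNorm, Fin.sum_univ_two, Matrix.one_apply]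
  | succ n ih =>
    calc ‖Bout k (n + 1)‖ ≤ ‖Bout k n‖ * ‖Bmat (lam ^ n * k)‖ := Matrix.frobenius_norm_mul _ _
      _ ≤ √2 * √11 ^ n * √11 := by gcongr; exact norm_Bmat_le _
      _ = √2 * √11 ^ (n + 1) := by ring

theorem det_Bout (k : ℝ) (n : ℕ) :
    (Bout k n).det = ∏ ℓ ∈ Finset.range n, -pfun (lam ^ ℓ * k) := by
  induction n with
  | zero => simp [Bout]
  | succ n ih => rw [Bout, Matrix.det_mul, ih, det_Bmat, Finset.prod_range_succ]

section NonvanishingP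

variable {k : ℝ} (hk : ∀ m : ℕ, pfun (lam ^ m * k) ≠ 0)
include hk

theorem det_Bout_ne_zero (n : ℕ) : (Bout k n).det ≠ 0 := by
  rw [det_Bout]
  exact Finset.prod_ne_zero_iff.2 fun ℓ _ => neg_ne_zero.2 (hk ℓ)

theorem frobNorm_Bout_pos (n : ℕ) : 0 < frobNorm (Bout k n) := by
  rw [frobNorm_eq_norm, norm_pos_iff]
  rintro h
  simpa [h] using det_Bout_ne_zero hk n

theorem log_norm_det_Bout (n : ℕ) :
    log ‖(Bout k n).det‖ = ∑ ℓ ∈ Finset.range n, log ‖pfun (lam ^ ℓ * k)‖ := by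
  rw [det_Bout, norm_prod, log_prod fun ℓ _ => norm_ne_zero_iff.2 (neg_ne_zero.2 (hk ℓ))]
  simp only [norm_neg]

theorem log_frobNorm_inv_Bout (n : ℕ) :
    log (frobNorm (Bout k n)⁻¹) =
      log (frobNorm (Bout k n)) - ∑ ℓ ∈ Finset.range n, log ‖pfun (lam ^ ℓ * k)‖ := by
  have hpos := frobNorm_Bout_pos hk n
  rw [frobNorm_eq_norm, Matrix.frobenius_norm_inv_fin_two, ← frobNorm_eq_norm,
    log_div hpos.ne' (norm_ne_zero_iff.2 (det_Bout_ne_zero hk n)), log_norm_det_Bout hk]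

theorem sum_log_norm_pfun_le (n : ℕ) :
    ∑ ℓ ∈ Finset.range n, log ‖pfun (lam ^ ℓ * k)‖ ≤ 2 * log (frobNorm (Bout k n)) := by
  calc ∑ ℓ ∈ Finset.range n, log ‖pfun (lam ^ ℓ * k)‖ = log ‖(Bout k n).det‖ :=
        (log_norm_det_Bout hk n).symm
    _ ≤ log (‖Bout k n‖ ^ 2) :=
        log_le_log (norm_pos_iff.2 (det_Bout_ne_zero hk n)) (Matrix.norm_det_fin_two_le_sq _)
    _ = 2 * log (frobNorm (Bout k n)) := by rw [log_pow, frobNorm_eq_norm, Nat.cast_ofNat]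

theorem isBoundedUnder_le_inv_mul_log_frobNorm_Bout :
    IsBoundedUnder (· ≤ ·) atTop fun n : ℕ => (n : ℝ)⁻¹ * log (frobNorm (Bout k n)) :=
  isBoundedUnder_le_inv_mul_log (by positivity) (by positivity) (frobNorm_Bout_pos hk)
    fun n => (frobNorm_eq_norm _).trans_le (norm_Bout_le k n)

end NonvanishingP

/-- Let `k ∈ ℝ` satisfy `p(λᵐk) ≠ 0` for all `m ≥ 0` and
`lim_n (1/n)·∑_{ℓ<n} log|p(λˡk)| = 0`. Then `χ̃₁(k) + χ̃₂(k) = 0`. Moreover, if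
`(1/n)·log‖B⁽ⁿ⁾(k)‖_F` converges as `n → ∞`, then both `χ̃₁(k)` and `χ̃₂(k)` exist
as limits (not merely as limsups). -/
theorem stmt8 (k : ℝ) (hk : ∀ m : ℕ, pfun (lam ^ m * k) ≠ 0)
    (hsum : Tendsto (fun n : ℕ =>
        (n : ℝ)⁻¹ * ∑ ℓ ∈ Finset.range n, Real.log ‖pfun (lam ^ ℓ * k)‖)
      atTop (nhds 0)) :
    chi1 k + chi2 k = 0 ∧
    ((∃ L : ℝ, Tendsto (fun n : ℕ => (n : ℝ)⁻¹ * Real.log (frobNorm (Bout k n)))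
        atTop (nhds L)) →
      Tendsto (fun n : ℕ => -((n : ℝ)⁻¹ * Real.log (frobNorm (Bout k n))))
        atTop (nhds (chi1 k)) ∧
      Tendsto (fun n : ℕ => (n : ℝ)⁻¹ * Real.log (frobNorm ((Bout k n)⁻¹)))
        atTop (nhds (chi2 k))) := by
  let F : ℕ → ℝ := fun n => (n : ℝ)⁻¹ * log (frobNorm (Bout k n))
  let S : ℕ → ℝ := fun n => (n : ℝ)⁻¹ * ∑ ℓ ∈ Finset.range n, log ‖pfun (lam ^ ℓ * k)‖
  have hG : (fun n : ℕ => (n : ℝ)⁻¹ * log (frobNorm (Bout k n)⁻¹)) = F + -S := by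
    ext n
    simp only [log_frobNorm_inv_Bout hk, Pi.add_apply, Pi.neg_apply, F, S]
    ring
  have hF_le : IsBoundedUnder (· ≤ ·) atTop F := isBoundedUnder_le_inv_mul_log_frobNorm_Bout hk
  have hF_ge : IsBoundedUnder (· ≥ ·) atTop F :=
    (hsum.div_const 2).isBoundedUnder_ge.mono_ge (Eventually.of_forall fun n => by
      have := mul_le_mul_of_nonneg_left (sum_log_norm_pfun_le hk n) (inv_nonneg.2 n.cast_nonneg)
      simp only [F]
      linarith)
  have hS : Tendsto (-S) atTop (𝓝 0) := neg_zero (G := ℝ) ▸ hsum.neg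
  have hchi2 : chi2 k = -chi1 k := by
    rw [chi1, chi2, hG, limsup_add_of_right_tendsto_zero hF_le hF_ge hS, neg_neg]
  refine ⟨by rw [hchi2, add_neg_cancel], fun ⟨L, hL⟩ => ?_⟩
  have hGL : Tendsto (F + -S) atTop (𝓝 L) := add_zero L ▸ hL.add hS
  rw [chi1, chi2, hG, hL.limsup_eq, hGL.limsup_eq]
  exact ⟨hL.neg, hGL⟩
end

section
/- Define trigonometric polynomials P_n : ℝ → ℂ by P_{−1} ≡ 0, P₀ ≡ 1 and P_{n+1}(k) = P_n(k) + p(λⁿk)·P_{n−1}(k) for n ≥ 0. Then for all n ≥ 1 and all k ∈ ℝ: (1) B⁽ⁿ⁾(k) = [[P_n(k), P_{n−1}(k)], [p(k)·P_{n−1}(λk), p(k)·P_{n−2}(λk)]]; (2) consequently ‖B⁽ⁿ⁾(k)‖_F² = |P_n(k)|² + |P_{n−1}(k)|² + |p(k)|²·(|P_{n−1}(λk)|² + |P_{n−2}(λk)|²); and (3) for all n ≥ 0 and k ∈ ℝ, P_{n+1}(k/λ) = P_n(k) + p(k)·P_{n−1}(λk). -/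
open Filter

/-- The squared Frobenius norm of a complex 2×2 matrix. -/
noncomputable def frobSq (M : Matrix (Fin 2) (Fin 2) ℂ) : ℝ :=
  ∑ i : Fin 2, ∑ j : Fin 2, ‖M i j‖ ^ 2

/-- The shifted family of trigonometric polynomials: `Pm n = P_{n−1}`, so that
`Pm 0 = P_{−1} ≡ 0`, `Pm 1 = P₀ ≡ 1`, and
`Pm (n+2) k = P_{n+1}(k) = P_n(k) + p(λⁿk)·P_{n−1}(k) = Pm (n+1) k + p(λⁿk)·Pm n k`. -/
noncomputable def Pm : ℕ → ℝ → ℂ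
  | 0, _ => 0
  | 1, _ => 1
  | n + 2, k => Pm (n + 1) k + pfun (lam ^ n * k) * Pm n k

lemma lam_ne_zero : lam ≠ 0 := by
  unfold lam
  positivity

lemma Pm_add_two (n : ℕ) (k : ℝ) :
    Pm (n + 2) k = Pm (n + 1) k + pfun (lam ^ n * k) * Pm n k := rfl

lemma Bout_succ (k : ℝ) (n : ℕ) : Bout k (n + 1) = Bout k n * Bmat (lam ^ n * k) := rfl

lemma Bout_succ' (k : ℝ) (n : ℕ) : Bout k (n + 1) = Bmat k * Bout (lam * k) n := by
  induction n with
  | zero => simp [Bout]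
  | succ n ih =>
    rw [Bout_succ, ih, Bout_succ, mul_assoc, pow_succ, mul_assoc]

lemma Bout_succ_eq_Pm (k : ℝ) (n : ℕ) :
    Bout k (n + 1) =
      !![Pm (n + 2) k, Pm (n + 1) k; pfun k * Pm (n + 1) (lam * k), pfun k * Pm n (lam * k)] := by
  induction n with
  | zero => simp [Bout, Bmat, Pm]
  | succ n ih =>
    rw [Bout_succ, ih, Bmat, Matrix.mul_fin_two, Pm_add_two (n + 1), Pm_add_two n (lam * k),
      ← mul_assoc, ← pow_succ]
    ring_nf

lemma frobSq_fin_two (a b c d : ℂ) :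
    frobSq !![a, b; c, d] = ‖a‖ ^ 2 + ‖b‖ ^ 2 + ‖c‖ ^ 2 + ‖d‖ ^ 2 := by
  simp [frobSq, Fin.sum_univ_two, add_assoc]

/-- With `P_{−1} ≡ 0`, `P₀ ≡ 1` and `P_{n+1}(k) = P_n(k) + p(λⁿk)·P_{n−1}(k)`
(encoded as `P_n = Pm (n+1)`), for all `n ≥ 1` and all `k ∈ ℝ`:
(1) `B⁽ⁿ⁾(k) = [[P_n(k), P_{n−1}(k)],[p(k)·P_{n−1}(λk), p(k)·P_{n−2}(λk)]]`;
(2) `‖B⁽ⁿ⁾(k)‖_F² = |P_n(k)|² + |P_{n−1}(k)|² + |p(k)|²·(|P_{n−1}(λk)|² + |P_{n−2}(λk)|²)`;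
and (3) for all `n ≥ 0` and `k ∈ ℝ`, `P_{n+1}(k/λ) = P_n(k) + p(k)·P_{n−1}(λk)`. -/
theorem stmt10 :
    (∀ n : ℕ, 1 ≤ n → ∀ k : ℝ,
      Bout k n =
        !![Pm (n + 1) k, Pm n k;
           pfun k * Pm n (lam * k), pfun k * Pm (n - 1) (lam * k)] ∧
      frobSq (Bout k n) =
        ‖Pm (n + 1) k‖ ^ 2 + ‖Pm n k‖ ^ 2 +
          ‖pfun k‖ ^ 2 *
            (‖Pm n (lam * k)‖ ^ 2 +
              ‖Pm (n - 1) (lam * k)‖ ^ 2)) ∧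
    (∀ n : ℕ, ∀ k : ℝ,
      Pm (n + 2) (k / lam) = Pm (n + 1) k + pfun k * Pm n (lam * k)) := by
  refine ⟨fun n hn k => ?_, fun n k => ?_⟩
  · obtain ⟨m, rfl⟩ := Nat.exists_eq_add_of_le' hn
    refine ⟨Bout_succ_eq_Pm k m, ?_⟩
    rw [Bout_succ_eq_Pm, frobSq_fin_two, norm_mul, norm_mul, mul_pow, mul_pow, Nat.add_sub_cancel]
    ring
  · have hk : lam * (k / lam) = k := mul_div_cancel₀ k lam_ne_zero
    cases n with
    | zero => simp [Pm]
    | succ m =>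
      -- compare the top-left entries of `B⁽ᵐ⁺²⁾(k/λ) = B(k/λ) · B⁽ᵐ⁺¹⁾(k)`
      have h := congrFun (congrFun (Bout_succ' (k / lam) (m + 1)) 0) 0
      rw [Bout_succ_eq_Pm, Bout_succ_eq_Pm, hk] at h
      simpa [Bmat, Matrix.mul_apply, Fin.sum_univ_two] using h
end

section
/- Let λ > 1 be fixed and let h ∈ L¹([0,1], ℂ) satisfy h(x/λ) = λ·h(x) for almost every x ∈ [0,1]. Then h = 0, i.e. h(x) = 0 for almost every x ∈ [0,1]. -/
/-!
Put `F c = ∫₀ᶜ ‖h‖`. Substituting `x ↦ x / λ` in the functional equation for `‖h‖` gives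
`F (c / λ) = F c` for `0 < c ≤ 1`, hence `F (λ⁻ⁿ) = F 1` for every `n`. Since `F` is continuous
with `F 0 = 0` and `λ⁻ⁿ → 0`, we get `∫₀¹ ‖h‖ = 0`, so `h = 0` almost everywhere.
-/

open MeasureTheory Filter Topology Set Interval

section ScalingInvariance

variable {E : Type*} [NormedAddCommGroup E] [NormedSpace ℝ E] {lm : ℝ} {f : ℝ → E}

theorem intervalIntegral_zero_div_eq_of_ae_comp_div {c : ℝ} (hlm : lm ≠ 0)
    (hf : ∀ᵐ x ∂volume.restrict (Ι 0 c), f (x / lm) = lm • f x) :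
    ∫ x in 0..c / lm, f x = ∫ x in 0..c, f x := by
  apply smul_right_injective E hlm
  calc lm • ∫ x in 0..c / lm, f x = ∫ x in 0..c, f (x / lm) := by
        rw [intervalIntegral.integral_comp_div f hlm, zero_div]
    _ = ∫ x in 0..c, lm • f x := by
        refine intervalIntegral.integral_congr_ae ?_
        exact (ae_restrict_iff' measurableSet_uIoc).mp hf
    _ = lm • ∫ x in 0..c, f x := intervalIntegral.integral_smul lm _

theorem intervalIntegral_zero_inv_pow_eq_of_ae_comp_div (hlm : 1 ≤ lm)
    (hf : ∀ᵐ x ∂volume.restrict (Icc 0 1), f (x / lm) = lm • f x) (n : ℕ) :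
    ∫ x in 0..lm⁻¹ ^ n, f x = ∫ x in 0..1, f x := by
  induction n with
  | zero => simp
  | succ n ih =>
    have hpos : 0 < lm⁻¹ ^ n := by positivity
    have hle : lm⁻¹ ^ n ≤ 1 := pow_le_one₀ (by positivity) (inv_le_one_of_one_le₀ hlm)
    have hsub : Ι 0 (lm⁻¹ ^ n) ⊆ Icc 0 1 := by
      rw [uIoc_of_le hpos.le]
      exact fun x hx => ⟨hx.1.le, hx.2.trans hle⟩
    rw [← ih, pow_succ, ← div_eq_mul_inv]
    exact intervalIntegral_zero_div_eq_of_ae_comp_div (by positivity)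
      (ae_restrict_of_ae_restrict_of_subset hsub hf)

theorem intervalIntegral_zero_one_eq_zero_of_ae_comp_div (hlm : 1 < lm)
    (hint : IntegrableOn f (Icc 0 1))
    (hf : ∀ᵐ x ∂volume.restrict (Icc 0 1), f (x / lm) = lm • f x) :
    ∫ x in 0..1, f x = 0 := by
  have hcont : ContinuousOn (fun c => ∫ x in 0..c, f x) (Icc 0 1) := by
    simpa only [uIcc_of_le zero_le_one] using
      intervalIntegral.continuousOn_primitive_interval (a := 0) (b := 1) (μ := volume)
        (by rwa [uIcc_of_le zero_le_one])
  have hinv : 0 < lm⁻¹ := by positivity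
  have hseq : Tendsto (fun n : ℕ => lm⁻¹ ^ n) atTop (𝓝[Icc 0 1] 0) :=
    tendsto_nhdsWithin_iff.mpr
      ⟨tendsto_pow_atTop_nhds_zero_of_lt_one hinv.le (inv_lt_one_of_one_lt₀ hlm),
        Eventually.of_forall fun n =>
          ⟨by positivity, pow_le_one₀ hinv.le (inv_lt_one_of_one_lt₀ hlm).le⟩⟩
  have hlim := (hcont 0 ⟨le_rfl, zero_le_one⟩).tendsto.comp hseq
  simp only [Function.comp_def, intervalIntegral_zero_inv_pow_eq_of_ae_comp_div hlm.le hf,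
    intervalIntegral.integral_same] at hlim
  exact tendsto_nhds_unique tendsto_const_nhds hlim

end ScalingInvariance

/-- Let `λ > 1` be fixed and let `h ∈ L¹([0,1], ℂ)` satisfy `h(x/λ) = λ·h(x)` for almost
every `x ∈ [0,1]`. Then `h = 0`, i.e. `h(x) = 0` for almost every `x ∈ [0,1]`. -/
theorem stmt17 (lm : ℝ) (hlm : 1 < lm) (h : ℝ → ℂ)
    (hint : IntegrableOn h (Set.Icc (0 : ℝ) 1))
    (heq : ∀ᵐ x ∂(volume.restrict (Set.Icc (0 : ℝ) 1)), h (x / lm) = (lm : ℂ) * h x) :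
    ∀ᵐ x ∂(volume.restrict (Set.Icc (0 : ℝ) 1)), h x = 0 := by
  have hnorm : ∀ᵐ x ∂volume.restrict (Icc 0 1), ‖h (x / lm)‖ = lm • ‖h x‖ := by
    filter_upwards [heq] with x hx
    rw [hx, norm_mul, Complex.norm_real, Real.norm_of_nonneg (by linarith), smul_eq_mul]
  have hzero := intervalIntegral_zero_one_eq_zero_of_ae_comp_div hlm hint.norm hnorm
  rw [intervalIntegral.integral_eq_zero_iff_of_le_of_nonneg_ae zero_le_one
    (Eventually.of_forall fun x => norm_nonneg (h x))
    ((intervalIntegrable_iff_integrableOn_Icc_of_le zero_le_one).mpr hint.norm)] at hzero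
  rw [← Measure.restrict_congr_set Ioc_ae_eq_Icc]
  filter_upwards [hzero] with x hx
  exact norm_eq_zero.mp hx
end

section
/- Let g : (0,∞) → ℝ be locally Lebesgue-integrable and nonnegative, and let λ > 1 be fixed. Assume g satisfies g(λx) ≥ ϑ(x)·g(x) for almost every x > 0, where ϑ is a bounded measurable function with ϑ(x) > 1 and ϑ(λx) = ϑ(x) for almost every x > 0. Then the absolutely continuous measure g·μ_L is translation bounded (i.e. sup_{t≥0} ∫_t^{t+1} g(x) dx < ∞) if and only if g = 0 almost everywhere on (0,∞). -/
/-!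
Iterating the hypothesis gives `g(λⁿx) ≥ ϑ(x)ⁿ g(x)` for a.e. `x > 0`. On an interval `(a, b]`
with `a > 0`, the substitution `y = λⁿx` and translation boundedness give
`∫_a^b g(λⁿx) dx = λ⁻ⁿ ∫_{λⁿa}^{λⁿb} g ≤ C (b - a + 1)`, so `∫_a^b ϑⁿ g` stays bounded in `n`.
Since `ϑⁿ g` increases to `∞` wherever `g > 0`, monotone convergence forces `g = 0` a.e.
-/

open MeasureTheory Set
open scoped ENNReal

theorem setLIntegral_preimage_mul_left (f : ℝ → ℝ≥0∞) {c : ℝ} (hc : c ≠ 0) (s : Set ℝ) :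
    ∫⁻ x in (c * ·) ⁻¹' s, f (c * x) = ENNReal.ofReal |c⁻¹| * ∫⁻ y in s, f y := by
  have he : MeasurableEmbedding (c * ·) := (Homeomorph.mulLeft₀ c hc).measurableEmbedding
  rw [← he.lintegral_map, ← he.restrict_map, Real.map_volume_mul_left hc, Measure.restrict_smul,
    lintegral_smul_measure, smul_eq_mul]

theorem measure_Ioc_le_of_translation_bounded {ν : Measure ℝ} {s a : ℝ} {C : ℝ≥0∞}
    (h : ∀ t, s < t → ν (Ioc t (t + 1)) ≤ C) (ha : s < a) (b : ℝ) :
    ν (Ioc a b) ≤ ENNReal.ofReal (b - a + 1) * C := by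
  have hN : ∀ N : ℕ, ν (Ioc a (a + N)) ≤ N * C := by
    intro N
    induction N with
    | zero => simp
    | succ N ih =>
      have hsplit : Ioc a (a + (N + 1 : ℕ)) = Ioc a (a + N) ∪ Ioc (a + N) (a + N + 1) := by
        rw [Ioc_union_Ioc_eq_Ioc (by simp) (by simp)]
        push_cast; ring_nf
      calc ν (Ioc a (a + (N + 1 : ℕ))) ≤ ν (Ioc a (a + N)) + ν (Ioc (a + N) (a + N + 1)) := by
            rw [hsplit]; exact measure_union_le _ _
        _ ≤ N * C + C := add_le_add ih (h _ (by linarith [(N.cast_nonneg : (0 : ℝ) ≤ N)]))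
        _ = (N + 1 : ℕ) * C := by push_cast; ring
  rcases le_or_gt b a with hba | hab
  · simp [Ioc_eq_empty_of_le hba]
  calc ν (Ioc a b) ≤ ν (Ioc a (a + ⌈b - a⌉₊)) :=
        measure_mono (Ioc_subset_Ioc_right (by linarith [Nat.le_ceil (b - a)]))
    _ ≤ ⌈b - a⌉₊ * C := hN _
    _ ≤ ENNReal.ofReal (b - a + 1) * C := by
        gcongr
        rw [← ENNReal.ofReal_natCast]
        exact ENNReal.ofReal_le_ofReal (Nat.ceil_lt_add_one (by linarith)).le

theorem lintegral_Ioc_comp_mul_le_of_translation_bounded {f : ℝ → ℝ≥0∞} {C : ℝ≥0∞}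
    (h : ∀ t, 0 < t → ∫⁻ x in Ioc t (t + 1), f x ≤ C) {a : ℝ} (ha : 0 < a) (b : ℝ)
    {c : ℝ} (hc : 1 ≤ c) :
    ∫⁻ x in Ioc a b, f (c * x) ≤ ENNReal.ofReal (b - a + 1) * C := by
  have hc0 : 0 < c := zero_lt_one.trans_le hc
  have hν : ∀ t, 0 < t → volume.withDensity f (Ioc t (t + 1)) ≤ C := fun t ht => by
    rw [withDensity_apply _ measurableSet_Ioc]; exact h t ht
  have hscale : ENNReal.ofReal c * ∫⁻ x in Ioc a b, f (c * x) =
      volume.withDensity f (Ioc (c * a) (c * b)) := by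
    have hpre : Ioc a b = (c * ·) ⁻¹' Ioc (c * a) (c * b) := by
      rw [preimage_const_mul_Ioc₀ _ _ hc0, mul_div_cancel_left₀ _ hc0.ne',
        mul_div_cancel_left₀ _ hc0.ne']
    rw [withDensity_apply _ measurableSet_Ioc, hpre, setLIntegral_preimage_mul_left f hc0.ne',
      abs_inv, abs_of_pos hc0, ← mul_assoc, ← ENNReal.ofReal_mul hc0.le,
      mul_inv_cancel₀ hc0.ne', ENNReal.ofReal_one, one_mul]
  refine (ENNReal.mul_le_mul_iff_right (by simpa using hc0) ENNReal.ofReal_ne_top).1 ?_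
  calc ENNReal.ofReal c * ∫⁻ x in Ioc a b, f (c * x)
      ≤ ENNReal.ofReal (c * b - c * a + 1) * C :=
        hscale ▸ measure_Ioc_le_of_translation_bounded hν (by positivity) _
    _ ≤ ENNReal.ofReal (c * (b - a + 1)) * C := by gcongr; nlinarith
    _ = ENNReal.ofReal c * (ENNReal.ofReal (b - a + 1) * C) := by
        rw [ENNReal.ofReal_mul hc0.le, mul_assoc]

theorem ae_restrict_Ioi_comp_mul_left {p : ℝ → Prop} {c : ℝ} (hc : 0 < c)
    (h : ∀ᵐ x ∂volume.restrict (Ioi 0), p x) : ∀ᵐ x ∂volume.restrict (Ioi 0), p (c * x) := by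
  have hq : Measure.QuasiMeasurePreserving (c * ·) volume volume :=
    ⟨measurable_const_mul c, by
      rw [Real.map_volume_mul_left hc.ne']; exact Measure.smul_absolutelyContinuous⟩
  rw [ae_restrict_iff' measurableSet_Ioi] at h ⊢
  filter_upwards [hq.ae h] with x hx hx0 using hx (mul_pos hc hx0)

theorem ae_restrict_Ioi_comp_pow_mul_eq {φ : ℝ → ℝ} {c : ℝ} (hc : 0 < c)
    (h : ∀ᵐ x ∂volume.restrict (Ioi 0), φ (c * x) = φ x) (n : ℕ) :
    ∀ᵐ x ∂volume.restrict (Ioi 0), φ (c ^ n * x) = φ x := by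
  induction n with
  | zero => simp
  | succ n ih =>
    filter_upwards [ih, ae_restrict_Ioi_comp_mul_left (pow_pos hc n) h] with x hn h1
    rw [pow_succ', mul_assoc, h1, hn]

theorem ae_restrict_Ioi_pow_mul_le_comp_pow_mul {g θ : ℝ → ℝ} {c : ℝ} (hc : 0 < c)
    (hθ_nn : ∀ᵐ x ∂volume.restrict (Ioi 0), 0 ≤ θ x)
    (hθ_per : ∀ᵐ x ∂volume.restrict (Ioi 0), θ (c * x) = θ x)
    (hineq : ∀ᵐ x ∂volume.restrict (Ioi 0), θ x * g x ≤ g (c * x)) (n : ℕ) :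
    ∀ᵐ x ∂volume.restrict (Ioi 0), θ x ^ n * g x ≤ g (c ^ n * x) := by
  induction n with
  | zero => simp
  | succ n ih =>
    filter_upwards [ih, hθ_nn, ae_restrict_Ioi_comp_pow_mul_eq hc hθ_per n,
      ae_restrict_Ioi_comp_mul_left (pow_pos hc n) hineq] with x hn hθx hper hstep
    calc θ x ^ (n + 1) * g x = θ x * (θ x ^ n * g x) := by ring
      _ ≤ θ (c ^ n * x) * g (c ^ n * x) := by rw [hper]; exact mul_le_mul_of_nonneg_left hn hθx
      _ ≤ g (c ^ (n + 1) * x) := by rwa [pow_succ', mul_assoc]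

theorem ae_eq_zero_of_lintegral_pow_mul_le {α : Type*} [MeasurableSpace α] {μ : Measure α}
    {θ g : α → ℝ} (hθ : AEMeasurable θ μ) (hg : AEMeasurable g μ)
    (hθ1 : ∀ᵐ x ∂μ, 1 < θ x) (hg0 : ∀ᵐ x ∂μ, 0 ≤ g x) {K : ℝ≥0∞} (hK : K ≠ ⊤)
    (h : ∀ n : ℕ, ∫⁻ x, ENNReal.ofReal (θ x ^ n * g x) ∂μ ≤ K) : ∀ᵐ x ∂μ, g x = 0 := by
  set F : ℕ → α → ℝ≥0∞ := fun n x => ENNReal.ofReal (θ x ^ n * g x)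
  have hF : ∀ n, AEMeasurable (F n) μ := fun n => ((hθ.pow_const n).mul hg).ennreal_ofReal
  have hmono : ∀ᵐ x ∂μ, Monotone fun n => F n x := by
    filter_upwards [hθ1, hg0] with x hθx hgx
    exact fun m n hmn => ENNReal.ofReal_le_ofReal <|
      mul_le_mul_of_nonneg_right (pow_le_pow_right₀ hθx.le hmn) hgx
  have hsup : ∫⁻ x, ⨆ n, F n x ∂μ ≠ ⊤ := by
    rw [lintegral_iSup' hF hmono]
    exact ne_top_of_le_ne_top hK (iSup_le h)
  filter_upwards [ae_lt_top' (AEMeasurable.iSup hF) hsup, hθ1, hg0] with x hfin hθx hgx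
  by_contra hne
  have hbound : ∀ n, θ x ^ n * g x ≤ (⨆ n, F n x).toReal := fun n =>
    (ENNReal.ofReal_le_iff_le_toReal hfin.ne).1 (le_iSup (fun n => F n x) n)
  obtain ⟨n, hn⟩ := pow_unbounded_of_one_lt ((⨆ n, F n x).toReal / g x) hθx
  rw [div_lt_iff₀ (lt_of_le_of_ne hgx (Ne.symm hne))] at hn
  exact (hbound n).not_gt hn

theorem lintegral_Ioc_ofReal_le_of_intervalIntegral_le {g : ℝ → ℝ} {C : ℝ}
    (hloc : LocallyIntegrableOn g (Ioi 0)) (hg_nn : ∀ᵐ x ∂volume.restrict (Ioi 0), 0 ≤ g x)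
    (h : ∀ t, 0 ≤ t → ∫ x in t..(t + 1), g x ≤ C) {t : ℝ} (ht : 0 < t) :
    ∫⁻ x in Ioc t (t + 1), ENNReal.ofReal (g x) ≤ ENNReal.ofReal C := by
  have hsub : Icc t (t + 1) ⊆ Ioi 0 := fun x hx => ht.trans_le hx.1
  have hint : IntegrableOn g (Ioc t (t + 1)) :=
    (hloc.integrableOn_compact_subset hsub isCompact_Icc).mono_set Ioc_subset_Icc_self
  rw [← ofReal_integral_eq_lintegral_ofReal hint
    (ae_restrict_of_ae_restrict_of_subset (Ioc_subset_Icc_self.trans hsub) hg_nn),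
    ← intervalIntegral.integral_of_le (by linarith)]
  exact ENNReal.ofReal_le_ofReal (h t ht.le)

theorem ae_eq_zero_of_translation_bounded_of_scaling {g θ : ℝ → ℝ} {lm C : ℝ} (hlm : 1 < lm)
    (hloc : LocallyIntegrableOn g (Ioi 0)) (hg_nn : ∀ᵐ x ∂volume.restrict (Ioi 0), 0 ≤ g x)
    (hθ_meas : Measurable θ) (hθ_gt : ∀ᵐ x ∂volume.restrict (Ioi 0), 1 < θ x)
    (hθ_per : ∀ᵐ x ∂volume.restrict (Ioi 0), θ (lm * x) = θ x)
    (hineq : ∀ᵐ x ∂volume.restrict (Ioi 0), θ x * g x ≤ g (lm * x))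
    (hC : ∀ t, 0 ≤ t → ∫ x in t..(t + 1), g x ≤ C) :
    ∀ᵐ x ∂volume.restrict (Ioi 0), g x = 0 := by
  have hgrowth := ae_restrict_Ioi_pow_mul_le_comp_pow_mul (zero_lt_one.trans hlm)
    (hθ_gt.mono fun x hx => zero_le_one.trans hx.le) hθ_per hineq
  refine ae_restrict_of_ae_restrict_inter_Ioo fun a b ha _ _ => ?_
  have hsub : Ioc a b ⊆ Ioi 0 := fun x hx => lt_trans ha hx.1
  refine ae_restrict_of_ae_restrict_of_subset (inter_subset_right.trans Ioo_subset_Ioc_self) ?_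
  have hbound : ∀ n : ℕ, ∫⁻ x in Ioc a b, ENNReal.ofReal (θ x ^ n * g x) ≤
      ENNReal.ofReal (b - a + 1) * ENNReal.ofReal C := fun n =>
    calc ∫⁻ x in Ioc a b, ENNReal.ofReal (θ x ^ n * g x)
        ≤ ∫⁻ x in Ioc a b, ENNReal.ofReal (g (lm ^ n * x)) :=
          lintegral_mono_ae <| (ae_restrict_of_ae_restrict_of_subset hsub (hgrowth n)).mono
            fun x hx => ENNReal.ofReal_le_ofReal hx
      _ ≤ ENNReal.ofReal (b - a + 1) * ENNReal.ofReal C :=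
          lintegral_Ioc_comp_mul_le_of_translation_bounded
            (fun t ht => lintegral_Ioc_ofReal_le_of_intervalIntegral_le hloc hg_nn hC ht) ha b
            (one_le_pow₀ hlm.le)
  exact ae_eq_zero_of_lintegral_pow_mul_le hθ_meas.aemeasurable
    (hloc.aestronglyMeasurable.aemeasurable.mono_set hsub)
    (ae_restrict_of_ae_restrict_of_subset hsub hθ_gt)
    (ae_restrict_of_ae_restrict_of_subset hsub hg_nn)
    (ENNReal.mul_ne_top ENNReal.ofReal_ne_top ENNReal.ofReal_ne_top) hbound

theorem stmt18_general (g θ : ℝ → ℝ) (lm : ℝ) (hlm : 1 < lm)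
    (hloc : LocallyIntegrableOn g (Set.Ioi (0 : ℝ)) volume)
    (hg_nn : ∀ᵐ x ∂(volume.restrict (Set.Ioi (0 : ℝ))), 0 ≤ g x)
    (hθ_meas : Measurable θ)
    (hθ_gt : ∀ᵐ x ∂(volume.restrict (Set.Ioi (0 : ℝ))), 1 < θ x)
    (hθ_per : ∀ᵐ x ∂(volume.restrict (Set.Ioi (0 : ℝ))), θ (lm * x) = θ x)
    (hineq : ∀ᵐ x ∂(volume.restrict (Set.Ioi (0 : ℝ))), θ x * g x ≤ g (lm * x)) :
    (∃ Cb : ℝ, ∀ t : ℝ, 0 ≤ t → ∫ x in t..(t + 1), g x ≤ Cb) ↔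
      (∀ᵐ x ∂(volume.restrict (Set.Ioi (0 : ℝ))), g x = 0) := by
  refine ⟨fun ⟨C, hC⟩ => ae_eq_zero_of_translation_bounded_of_scaling hlm hloc hg_nn hθ_meas
    hθ_gt hθ_per hineq hC, fun h0 => ⟨0, fun t ht => ?_⟩⟩
  have hsub : Ioc t (t + 1) ⊆ Ioi 0 := fun x hx => ht.trans_lt hx.1
  rw [intervalIntegral.integral_of_le (by linarith),
    integral_eq_zero_of_ae (ae_restrict_of_ae_restrict_of_subset hsub h0)]

/-- Let `g : (0,∞) → ℝ` be locally integrable and nonnegative, `λ > 1`, and assume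
`g(λx) ≥ ϑ(x)·g(x)` for a.e. `x > 0`, where `ϑ` is bounded, measurable, satisfies
`ϑ(x) > 1` and `ϑ(λx) = ϑ(x)` for a.e. `x > 0`. Then the absolutely continuous measure
`g·μ_L` is translation bounded (i.e. `sup_{t≥0} ∫_t^{t+1} g < ∞`) if and only if
`g = 0` almost everywhere on `(0,∞)`. -/
theorem stmt18 (g θ : ℝ → ℝ) (lm : ℝ) (hlm : 1 < lm)
    (hloc : LocallyIntegrableOn g (Set.Ioi (0 : ℝ)) volume)
    (hg_nn : ∀ᵐ x ∂(volume.restrict (Set.Ioi (0 : ℝ))), 0 ≤ g x)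
    (hθ_meas : Measurable θ) (hθ_bdd : ∃ Cb : ℝ, ∀ x : ℝ, |θ x| ≤ Cb)
    (hθ_gt : ∀ᵐ x ∂(volume.restrict (Set.Ioi (0 : ℝ))), 1 < θ x)
    (hθ_per : ∀ᵐ x ∂(volume.restrict (Set.Ioi (0 : ℝ))), θ (lm * x) = θ x)
    (hineq : ∀ᵐ x ∂(volume.restrict (Set.Ioi (0 : ℝ))), θ x * g x ≤ g (lm * x)) :
    (∃ Cb : ℝ, ∀ t : ℝ, 0 ≤ t → ∫ x in t..(t + 1), g x ≤ Cb) ↔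
      (∀ᵐ x ∂(volume.restrict (Set.Ioi (0 : ℝ))), g x = 0) :=
  stmt18_general g θ lm hlm hloc hg_nn hθ_meas hθ_gt hθ_per hineq
end
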